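/- arXiv:math/0408139 — 6 statements merged into one kernel-verified Lean document; each statement's English description precedes it below -/
import Mathlib

section
/- Let p be an odd prime, m > 1 an integer, χ a primitive multiplicative character mod p^m (extended by zero on non-units), and f ∈ ℤ[X] a polynomial in one variable. Then the complete character sum S_f = Σ_{x ∈ ℤ/p^mℤ} χ(f(x)) equals the subsum over only those x with v_p(f'(x)) ≥ (m-1)/2, where v_p denotes p-adic valuation of the derivative evaluated at a lift of x. -/
/-- A multiplicative character mod `p^m` is primitive if it is not induced by a
character mod `p^n` for any `n < m`. -/
def MulPrimitive (p m : ℕ) (χ : MulChar (ZMod (p ^ m)) ℂ) : Prop :=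
  ∀ n : ℕ, ∀ hn : n < m, ∀ χ₁ : MulChar (ZMod (p ^ n)) ℂ,
    ∃ a : ZMod (p ^ m), χ a ≠ χ₁ (ZMod.castHom (pow_dvd_pow p hn.le) (ZMod (p ^ n)) a)

lemma pow_dvd_iff_val (p m j : ℕ) [Fact p.Prime] (a : ZMod (p ^ m)) :
    (p : ZMod (p ^ m)) ^ j ∣ a ↔ p ^ j ∣ a.val := by
  constructor
  · rintro ⟨b, rfl⟩
    by_cases hj : j ≤ m
    · have h : ((p : ZMod (p^m)) ^ j * b) = ((p ^ j * b.val : ℕ) : ZMod (p^m)) := by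
        push_cast [ZMod.natCast_rightInverse b]
        ring
      rw [h, ZMod.val_natCast]
      exact (Nat.dvd_mod_iff (pow_dvd_pow p hj)).mpr ⟨b.val, rfl⟩
    · have h : ((p:ZMod (p^m))^j) = 0 := by
        have h2 : ((p ^ j : ℕ) : ZMod (p^m)) = 0 :=
          (ZMod.natCast_eq_zero_iff _ _).mpr (pow_dvd_pow p (le_of_not_ge hj))
        simpa using h2
      rw [h, zero_mul]
      simp
  · rintro ⟨c, hc⟩
    refine ⟨(c : ZMod (p^m)), ?_⟩
    have h := ZMod.natCast_rightInverse a
    rw [← h, hc]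
    push_cast; ring

lemma isUnit_iff_not_dvd (p m : ℕ) [Fact p.Prime] (hm : 0 < m) (a : ZMod (p ^ m)) :
    IsUnit a ↔ ¬ (p : ZMod (p ^ m)) ∣ a := by
  have hp : p.Prime := Fact.out
  have h1 : (p : ZMod (p^m)) ∣ a ↔ p ∣ a.val := by
    simpa using pow_dvd_iff_val p m 1 a
  rw [h1]
  conv_lhs => rw [← ZMod.natCast_rightInverse a]
  rw [ZMod.isUnit_iff_coprime, Nat.coprime_pow_right_iff hm, Nat.coprime_comm,
    hp.coprime_iff_not_dvd]

lemma exists_char_ne (p m : ℕ) [Fact p.Prime] (hm : 1 < m)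
    (χ : MulChar (ZMod (p ^ m)) ℂ) (hχ : MulPrimitive p m χ) :
    ∃ t : ZMod (p ^ m), χ (1 + (p : ZMod (p ^ m)) ^ (m - 1) * t) ≠ 1 := by
  by_contra hcon
  push_neg at hcon
  have hp : p.Prime := Fact.out
  have hdvd : p ^ (m-1) ∣ p ^ m := pow_dvd_pow p (by omega)
  set π := ZMod.castHom hdvd (ZMod (p ^ (m-1))) with hπ
  -- χ is constant on fibers of π
  have C : ∀ a b : ZMod (p ^ m), π a = π b → χ a = χ b := by
    intro a b hab
    have hdiff : (p : ZMod (p ^ m)) ^ (m-1) ∣ a - b := by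
      rw [pow_dvd_iff_val]
      have h0 : π (a - b) = 0 := by rw [map_sub, hab, sub_self]
      have : ((a - b).val : ZMod (p ^ (m-1))) = 0 := by
        rwa [hπ, ZMod.castHom_apply, ← ZMod.natCast_val] at h0
      exact (ZMod.natCast_eq_zero_iff _ _).mp this
    obtain ⟨d, hd⟩ := hdiff
    by_cases hb : IsUnit b
    · obtain ⟨v, hv⟩ := hb
      have ha : a = b * (1 + (p : ZMod (p ^ m)) ^ (m-1) * (d * ↑v⁻¹)) := by
        have hbv : b * ↑v⁻¹ = 1 := by rw [← hv]; exact v.mul_inv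
        calc a = b + (a - b) := by ring
        _ = b + (p : ZMod (p ^ m)) ^ (m-1) * d := by rw [hd]
        _ = b * (1 + (p : ZMod (p ^ m)) ^ (m-1) * (d * ↑v⁻¹)) := by
            rw [mul_add, mul_one]
            congr 1
            symm
            calc b * ((p:ZMod (p^m)) ^ (m-1) * (d * ↑v⁻¹))
                = (b * ↑v⁻¹) * ((p:ZMod (p^m)) ^ (m-1) * d) := by ring
              _ = (p:ZMod (p^m)) ^ (m-1) * d := by rw [hbv, one_mul]
      rw [ha, map_mul, hcon, mul_one]
    · have ha : ¬ IsUnit a := by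
        rw [isUnit_iff_not_dvd p m (by omega)] at hb ⊢
        push_neg at hb ⊢
        obtain ⟨e, he⟩ := hb
        refine ⟨e + (p:ZMod (p^m))^(m-2) * d, ?_⟩
        have : a = b + (p:ZMod (p^m))^(m-1) * d := by rw [← hd]; ring
        rw [this, he]
        have hpow : (p:ZMod (p^m))^(m-1) = p * (p:ZMod (p^m))^(m-2) := by
          rw [← pow_succ']
          congr 1
          omega
        rw [hpow]; ring
      rw [χ.map_nonunit ha, χ.map_nonunit hb]
  -- build the induced character mod p^(m-1)
  have hlift : ∀ w : ZMod (p ^ (m-1)), π ((w.val : ZMod (p ^ m))) = w := by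
    intro w
    rw [map_natCast]
    exact ZMod.natCast_rightInverse w
  let χ₁ : MulChar (ZMod (p ^ (m-1))) ℂ :=
  { toFun := fun w => χ ((w.val : ZMod (p ^ m))),
    map_one' := by
      have h := C (((1 : ZMod (p ^ (m-1))).val : ZMod (p ^ m))) 1 (by rw [hlift, map_one])
      simpa using h
    map_mul' := fun v w => by
      have h1 : π ((((v*w).val : ℕ) : ZMod (p^m)))
          = π ((v.val : ZMod (p^m)) * (w.val : ZMod (p^m))) := by
        rw [hlift, map_mul, hlift, hlift]
      calc χ ((((v*w).val : ℕ) : ZMod (p^m)))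
          = χ ((v.val : ZMod (p^m)) * (w.val : ZMod (p^m))) := C _ _ h1
        _ = _ := map_mul χ _ _
    map_nonunit' := fun w hw => χ.map_nonunit (fun h => hw (hlift w ▸ h.map π)) }
  obtain ⟨a, ha⟩ := hχ (m-1) (by omega) χ₁
  apply ha
  exact C a (((π a).val : ZMod (p ^ m))) (hlift (π a)).symm

lemma sum_decomp (p m k : ℕ) [Fact p.Prime] (hk : k ≤ m) (F : ZMod (p ^ m) → ℂ) :
    ∑ x : ZMod (p ^ m), F x =
      ∑ y : ZMod (p ^ k), ∑ z : ZMod (p ^ (m - k)),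
        F ((y.val : ZMod (p ^ m)) + (p : ZMod (p ^ m)) ^ k * (z.val : ZMod (p ^ m))) := by
  have hp : p.Prime := Fact.out
  have hpk : 0 < p ^ k := Nat.pow_pos hp.pos
  set e : ZMod (p ^ k) × ZMod (p ^ (m - k)) → ZMod (p ^ m) :=
    fun yz => ((yz.1.val + p ^ k * yz.2.val : ℕ) : ZMod (p ^ m)) with he
  have hval : ∀ yz : ZMod (p ^ k) × ZMod (p ^ (m - k)),
      (e yz).val = yz.1.val + p ^ k * yz.2.val := by
    intro yz
    rw [he, ZMod.val_natCast, Nat.mod_eq_of_lt]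
    have h1 : yz.1.val < p ^ k := ZMod.val_lt _
    have h2 : yz.2.val < p ^ (m - k) := ZMod.val_lt _
    calc yz.1.val + p ^ k * yz.2.val < p ^ k + p ^ k * yz.2.val := by omega
      _ ≤ p ^ k + p ^ k * (p ^ (m - k) - 1) := by
          have := Nat.mul_le_mul_left (p ^ k) (by omega : yz.2.val ≤ p ^ (m-k) - 1)
          omega
      _ = p ^ k * p ^ (m - k) := by
          have : 0 < p ^ (m - k) := Nat.pow_pos hp.pos
          rw [Nat.mul_sub, Nat.mul_one]
          have hle : p ^ k ≤ p ^ k * p ^ (m - k) := Nat.le_mul_of_pos_right _ this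
          omega
      _ = p ^ m := by rw [← pow_add]; congr 1; omega
  have hinj : Function.Injective e := by
    intro a b hab
    have h := congrArg ZMod.val hab
    rw [hval, hval] at h
    have h1a : a.1.val < p ^ k := ZMod.val_lt _
    have h1b : b.1.val < p ^ k := ZMod.val_lt _
    have hv1 : a.1.val = b.1.val := by
      have := congrArg (· % p ^ k) h
      simpa [Nat.add_mul_mod_self_left, Nat.mod_eq_of_lt h1a, Nat.mod_eq_of_lt h1b] using this
    have hv2 : a.2.val = b.2.val := by
      rw [hv1] at h
      exact Nat.eq_of_mul_eq_mul_left hpk (by omega : p ^ k * a.2.val = p ^ k * b.2.val)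
    exact Prod.ext (ZMod.val_injective _ hv1) (ZMod.val_injective _ hv2)
  have hbij : Function.Bijective e := by
    rw [Fintype.bijective_iff_injective_and_card]
    refine ⟨hinj, ?_⟩
    simp only [Fintype.card_prod, ZMod.card]
    rw [← pow_add]
    congr 1
    omega
  rw [← Fintype.sum_bijective e hbij _ F (fun yz => rfl), Fintype.sum_prod_type]
  apply Finset.sum_congr rfl
  intro y _
  apply Finset.sum_congr rfl
  intro z _
  congr 1
  rw [he]
  push_cast
  ring

open Polynomial in
lemma taylor_step (p m k : ℕ) [Fact p.Prime] (h2k : m ≤ 2 * k) (f : Polynomial ℤ)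
    (a s : ZMod (p ^ m)) :
    aeval (a + (p : ZMod (p ^ m)) ^ k * s) f
      = aeval a f + (p : ZMod (p ^ m)) ^ k * s * aeval a (derivative f) := by
  set φ := algebraMap ℤ (ZMod (p ^ m))
  set g := f.map φ with hg
  have hev : ∀ (q : Polynomial ℤ) (x : ZMod (p ^ m)), aeval x q = (q.map φ).eval x := by
    intro q x
    rw [aeval_def, eval_map]
  have hzero : ((p : ZMod (p ^ m)) ^ k * s) ^ 2 = 0 := by
    have h1 : ((p ^ (2*k) : ℕ) : ZMod (p ^ m)) = 0 :=
      (ZMod.natCast_eq_zero_iff _ _).mpr (pow_dvd_pow p h2k)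
    have h2 : ((p : ZMod (p ^ m)) ^ k) ^ 2 = 0 := by
      push_cast at h1
      rw [← h1]
      ring
    rw [mul_pow, h2, zero_mul]
  obtain ⟨c, hc⟩ := g.binomExpansion a ((p : ZMod (p ^ m)) ^ k * s)
  rw [hev f, hev f, hev (derivative f), hc, hzero, mul_zero, add_zero, derivative_map]
  ring

open Polynomial in
open scoped Classical in
/-- only the points where `v_p(f'(x)) ≥ (m-1)/2`, i.e. where
`p^⌈(m-1)/2⌉ = p^(m/2)` divides `f'(x)`, contribute to the character sum. -/
theorem charSum_eq_sum_over_near_critical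
    (p m : ℕ) [Fact p.Prime] (hodd : p ≠ 2) (hm : 1 < m)
    (χ : MulChar (ZMod (p ^ m)) ℂ) (hχ : MulPrimitive p m χ)
    (f : Polynomial ℤ) :
    ∑ x : ZMod (p ^ m), χ (aeval x f) =
      ∑ x ∈ Finset.univ.filter
          (fun x : ZMod (p ^ m) => (p : ZMod (p ^ m)) ^ (m / 2) ∣ aeval x (derivative f)),
        χ (aeval x f) := by
  have hp : p.Prime := Fact.out
  set P : ZMod (p ^ m) → Prop :=
    fun x => (p : ZMod (p ^ m)) ^ (m / 2) ∣ aeval x (derivative f) with hP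
  rw [← Finset.sum_filter_add_sum_filter_not Finset.univ P (fun x => χ (aeval x f))]
  suffices h0 : ∑ x ∈ Finset.univ.filter (fun x => ¬ P x), χ (aeval x f) = 0 by
    rw [h0, add_zero]
  rw [Finset.sum_filter]
  set k := m - m / 2 with hkdef
  have hk : k ≤ m := by omega
  have h2k : m ≤ 2 * k := by omega
  have hmk : m - k = m / 2 := by omega
  have hm2 : 1 ≤ m / 2 := by omega
  rw [sum_decomp p m k hk]
  apply Finset.sum_eq_zero
  intro y _
  set a : ZMod (p ^ m) := (y.val : ZMod (p ^ m)) with hadef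
  set c : ZMod (p ^ m) := aeval a (derivative f) with hcdef
  set u : ZMod (p ^ m) := aeval a f with hudef
  -- the condition P at each point of the fiber is equivalent to p^(m/2) ∣ c
  have hPiff : ∀ z : ZMod (p ^ (m - k)),
      P (a + (p : ZMod (p ^ m)) ^ k * (z.val : ZMod (p ^ m))) ↔
        (p : ZMod (p ^ m)) ^ (m / 2) ∣ c := by
    intro z
    simp only [hP]
    rw [taylor_step p m k h2k (derivative f) a (z.val : ZMod (p ^ m))]
    have hdvd2 : (p : ZMod (p ^ m)) ^ (m / 2) ∣
        (p : ZMod (p ^ m)) ^ k * (z.val : ZMod (p ^ m)) * aeval a (derivative (derivative f)) := by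
      refine Dvd.dvd.mul_right (Dvd.dvd.mul_right ?_ _) _
      exact pow_dvd_pow _ (by omega)
    rw [← hcdef]
    constructor
    · intro h
      have h2 := dvd_sub h hdvd2
      simpa using h2
    · intro h
      exact dvd_add h hdvd2
  by_cases hc : (p : ZMod (p ^ m)) ^ (m / 2) ∣ c
  · -- every term has a false condition
    apply Finset.sum_eq_zero
    intro z _
    rw [if_neg (not_not_intro ((hPiff z).mpr hc))]
  · -- the conditions are all true; the inner sum vanishes
    have pksq : (p : ZMod (p ^ m)) ^ k * (p : ZMod (p ^ m)) ^ k = 0 := by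
      have h1 : ((p ^ (2 * k) : ℕ) : ZMod (p ^ m)) = 0 :=
        (ZMod.natCast_eq_zero_iff _ _).mpr (pow_dvd_pow p h2k)
      push_cast at h1
      rw [← h1]
      ring
    have hred : ∀ n₁ n₂ : ℕ, n₁ ≡ n₂ [MOD p ^ (m - k)] →
        (p : ZMod (p ^ m)) ^ k * (n₁ : ZMod (p ^ m))
          = (p : ZMod (p ^ m)) ^ k * (n₂ : ZMod (p ^ m)) := by
      intro n₁ n₂ h
      have h2 : (p ^ k * n₁ : ℕ) ≡ p ^ k * n₂ [MOD p ^ k * p ^ (m - k)] :=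
        Nat.ModEq.mul_left' _ h
      rw [← pow_add] at h2
      have h3 : k + (m - k) = m := by omega
      rw [h3] at h2
      have h4 := (ZMod.natCast_eq_natCast_iff _ _ _).mpr h2
      push_cast at h4
      exact h4
    by_cases hu : IsUnit u
    · obtain ⟨v, hv⟩ := hu
      set w : ZMod (p ^ m) := c * ↑v⁻¹ with hwdef
      -- the additive character z ↦ χ(1 + p^k z w)
      set ψ : AddChar (ZMod (p ^ (m - k))) ℂ :=
      { toFun := fun z => χ (1 + (p : ZMod (p ^ m)) ^ k * (z.val : ZMod (p ^ m)) * w)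
        map_zero_eq_one' := by simp
        map_add_eq_mul' := fun z₁ z₂ => by
          have hv12 := hred ((z₁ + z₂).val) (z₁.val + z₂.val)
            (by rw [ZMod.val_add]; exact Nat.mod_modEq _ _)
          show χ _ = χ _ * χ _
          rw [← map_mul]
          congr 1
          push_cast at hv12 ⊢
          linear_combination w * hv12 -
            ((z₁.val : ZMod (p ^ m)) * (z₂.val : ZMod (p ^ m)) * w * w) * pksq } with hψdef
      -- ψ is nontrivial
      have hc0 : c ≠ 0 := fun h => hc (h ▸ dvd_zero _)
      have cv0 : c.val ≠ 0 := fun h => hc0 ((ZMod.val_eq_zero c).mp h)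
      set s : ℕ := c.val.factorization p with hsdef
      have hs : s < m / 2 := by
        by_contra hss
        exact hc ((pow_dvd_iff_val p m (m / 2) c).mpr
          (dvd_trans (pow_dvd_pow p (by omega)) (Nat.ordProj_dvd _ _)))
      set n : ℕ := c.val / p ^ s with hndef
      have hpn : ¬ p ∣ n := Nat.not_dvd_ordCompl hp cv0
      have hcn : p ^ s * n = c.val := Nat.ordProj_mul_ordCompl_eq_self _ _
      have hcz : c = (p : ZMod (p ^ m)) ^ s * (n : ZMod (p ^ m)) := by
        conv_lhs => rw [← ZMod.natCast_rightInverse c]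
        rw [← hcn]
        push_cast
        ring
      have nunit : IsUnit ((n : ℕ) : ZMod (p ^ m)) := by
        rw [isUnit_iff_not_dvd p m (by omega)]
        intro hdvd
        apply hpn
        have h1 : p ^ 1 ∣ ((n : ℕ) : ZMod (p ^ m)).val :=
          (pow_dvd_iff_val p m 1 _).mp (by simpa using hdvd)
        rw [ZMod.val_natCast] at h1
        simpa using (Nat.dvd_mod_iff (dvd_pow_self p (by omega : m ≠ 0))).mp (by simpa using h1)
      obtain ⟨nu, hnu⟩ := nunit
      obtain ⟨t, ht⟩ := exists_char_ne p m hm χ hχ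
      obtain ⟨j, hj⟩ : ∃ j : ℕ, k + j + s = m - 1 := ⟨m - 1 - k - s, by omega⟩
      set d : ZMod (p ^ m) := ↑nu⁻¹ * ↑v * t with hddef
      set z₀ : ZMod (p ^ (m - k)) := ((p ^ j * d.val : ℕ) : ZMod (p ^ (m - k))) with hz0def
      have key : (p : ZMod (p ^ m)) ^ k * (z₀.val : ZMod (p ^ m)) * w
          = (p : ZMod (p ^ m)) ^ (m - 1) * t := by
        have h1 := hred z₀.val (p ^ j * d.val)
          (by rw [hz0def, ZMod.val_natCast]; exact Nat.mod_modEq _ _)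
        rw [h1]
        push_cast [ZMod.natCast_rightInverse d]
        have hpow : (p : ZMod (p ^ m)) ^ k * (p : ZMod (p ^ m)) ^ j * (p : ZMod (p ^ m)) ^ s
            = (p : ZMod (p ^ m)) ^ (m - 1) := by
          rw [← pow_add, ← pow_add]
          congr 1 <;> omega
        have h2 : (↑nu⁻¹ * ↑nu : ZMod (p ^ m)) = 1 := nu.inv_mul
        have h3 : (↑v * ↑v⁻¹ : ZMod (p ^ m)) = 1 := v.mul_inv
        rw [hwdef, hcz, ← hnu, hddef]
        linear_combination
          ((p : ZMod (p ^ m)) ^ k * (p : ZMod (p ^ m)) ^ j * (p : ZMod (p ^ m)) ^ s * t *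
            (↑v * ↑v⁻¹ : ZMod (p ^ m))) * h2 +
          ((p : ZMod (p ^ m)) ^ k * (p : ZMod (p ^ m)) ^ j * (p : ZMod (p ^ m)) ^ s * t) * h3 +
          t * hpow
      have hψ : ψ ≠ 0 := by
        rw [AddChar.ne_zero_iff]
        refine ⟨z₀, ?_⟩
        show χ (1 + (p : ZMod (p ^ m)) ^ k * (z₀.val : ZMod (p ^ m)) * w) ≠ 1
        rw [key]
        exact ht
      calc ∑ z : ZMod (p ^ (m - k)),
            (if ¬ P (a + (p : ZMod (p ^ m)) ^ k * (z.val : ZMod (p ^ m)))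
              then χ (aeval (a + (p : ZMod (p ^ m)) ^ k * (z.val : ZMod (p ^ m))) f) else 0)
          = ∑ z : ZMod (p ^ (m - k)), χ u * ψ z := by
            apply Finset.sum_congr rfl
            intro z _
            rw [if_pos (fun hPx => hc ((hPiff z).mp hPx))]
            rw [taylor_step p m k h2k f a _, ← hudef, ← hcdef]
            have harg : u + (p : ZMod (p ^ m)) ^ k * (z.val : ZMod (p ^ m)) * c
                = u * (1 + (p : ZMod (p ^ m)) ^ k * (z.val : ZMod (p ^ m)) * w) := by
              rw [hwdef, ← hv]
              linear_combination
                (-((p : ZMod (p ^ m)) ^ k * (z.val : ZMod (p ^ m)) * c)) * v.mul_inv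
            rw [harg, map_mul]
            rfl
        _ = χ u * ∑ z : ZMod (p ^ (m - k)), ψ z := by rw [Finset.mul_sum]
        _ = 0 := by rw [AddChar.sum_eq_zero_iff_ne_zero.mpr hψ, mul_zero]
    · -- u is not a unit: every χ value vanishes
      apply Finset.sum_eq_zero
      intro z _
      rw [if_pos (fun hPx => hc ((hPiff z).mp hPx))]
      rw [taylor_step p m k h2k f a _, ← hudef, ← hcdef]
      apply χ.map_nonunit
      rw [isUnit_iff_not_dvd p m (by omega)]
      push_neg
      rw [isUnit_iff_not_dvd p m (by omega)] at hu
      push_neg at hu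
      obtain ⟨e, he⟩ := hu
      refine ⟨e + (p : ZMod (p ^ m)) ^ (k - 1) * (z.val : ZMod (p ^ m)) * c, ?_⟩
      have hpow : (p : ZMod (p ^ m)) ^ k = p * (p : ZMod (p ^ m)) ^ (k - 1) := by
        rw [← pow_succ']
        congr 1
        omega
      rw [he, hpow]
      ring
end

section
/- Let p be an odd prime, m ≥ 2 even, and χ a primitive multiplicative character mod p^m. Then Σ_{x ∈ ℤ/p^mℤ} χ(1 + x²) = p^{m/2}. -/
lemma ker_castHom {a b : ℕ} [NeZero b] (h : a ∣ b) (x : ZMod b)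
    (hx : ZMod.castHom h (ZMod a) x = 0) : ∃ z : ZMod b, x = (a : ZMod b) * z := by
  have h1 : ZMod.castHom h (ZMod a) x = (x.val : ZMod a) := by
    rw [ZMod.castHom_apply, ← ZMod.natCast_val]
  rw [h1, ZMod.natCast_eq_zero_iff] at hx
  obtain ⟨c, hc⟩ := hx
  refine ⟨(c : ZMod b), ?_⟩
  conv_lhs => rw [← ZMod.natCast_zmod_val x, hc]
  push_cast
  ring

lemma eq_add_of_cast_eq {a b : ℕ} [NeZero b] (h : a ∣ b) (x y : ZMod b)
    (hxy : ZMod.castHom h (ZMod a) x = ZMod.castHom h (ZMod a) y) :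
    ∃ z : ZMod b, x = y + (a : ZMod b) * z := by
  obtain ⟨z, hz⟩ := ker_castHom h (x - y) (by rw [map_sub, hxy, sub_self])
  exact ⟨z, by linear_combination hz⟩

lemma isUnit_zmod_pow_iff {p n : ℕ} (hp : p.Prime) (hn : 1 ≤ n) (x : ZMod (p ^ n)) :
    IsUnit x ↔ ¬ p ∣ x.val := by
  haveI : NeZero (p ^ n) := ⟨pow_ne_zero _ hp.pos.ne'⟩
  conv_lhs => rw [← ZMod.natCast_zmod_val x]
  rw [ZMod.isUnit_iff_coprime, Nat.coprime_pow_right_iff hn,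
    Nat.coprime_comm, hp.coprime_iff_not_dvd]

-- unit-ness only depends on the class mod p
lemma isUnit_add_pow_mul {p n : ℕ} (hp : p.Prime) (hn : 1 ≤ n) (x z : ZMod (p ^ n))
    {j : ℕ} (hj : 1 ≤ j) : IsUnit (x + (p : ZMod (p ^ n)) ^ j * z) ↔ IsUnit x := by
  haveI : NeZero (p ^ n) := ⟨pow_ne_zero _ hp.pos.ne'⟩
  haveI : Fact p.Prime := ⟨hp⟩
  have hd : (p : ℕ) ∣ p ^ n := dvd_pow_self p (Nat.one_le_iff_ne_zero.mp hn)
  have key : ∀ y : ZMod (p ^ n), IsUnit y ↔ (ZMod.castHom hd (ZMod p) y) ≠ 0 := by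
    intro y
    have h1 : ZMod.castHom hd (ZMod p) y = (y.val : ZMod p) := by
      rw [ZMod.castHom_apply, ← ZMod.natCast_val]
    rw [isUnit_zmod_pow_iff hp hn, h1, Ne, ZMod.natCast_eq_zero_iff]
  rw [key, key]
  have : ZMod.castHom hd (ZMod p) (x + (p : ZMod (p ^ n)) ^ j * z) = ZMod.castHom hd (ZMod p) x := by
    rw [map_add, map_mul, map_pow, map_natCast, ZMod.natCast_self,
      zero_pow (Nat.one_le_iff_ne_zero.mp hj), zero_mul, add_zero]
  rw [this]

lemma exists_nontrivial_on_ker {p m : ℕ} (hp : p.Prime) (hm : 2 ≤ m)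
    (χ : MulChar (ZMod (p ^ m)) ℂ) (hχ : MulPrimitive p m χ) :
    ∃ T : ZMod (p ^ m), χ (1 + (p : ZMod (p ^ m)) ^ (m - 1) * T) ≠ 1 := by
  haveI : NeZero (p ^ m) := ⟨pow_ne_zero _ hp.pos.ne'⟩
  haveI : NeZero (p ^ (m - 1)) := ⟨pow_ne_zero _ hp.pos.ne'⟩
  by_contra hcon
  push_neg at hcon
  set n := m - 1 with hn
  have hnm : n < m := Nat.sub_lt (by omega) one_pos
  have hd : p ^ n ∣ p ^ m := pow_dvd_pow p hnm.le
  set π := ZMod.castHom hd (ZMod (p ^ n)) with hπ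
  -- χ is constant on fibers of π
  have const : ∀ x y : ZMod (p ^ m), π x = π y → χ x = χ y := by
    intro x y hxy
    obtain ⟨z, hz⟩ := eq_add_of_cast_eq hd x y hxy
    have hpn : ((p : ZMod (p ^ m)) ^ n : ZMod (p ^ m)) = (p : ZMod (p ^ m)) ^ n := rfl
    by_cases hy : IsUnit y
    · have hy1 : y * y⁻¹ = 1 := ZMod.mul_inv_of_unit y hy
      have hx' : x = y * (1 + (p : ZMod (p ^ m)) ^ n * (y⁻¹ * z)) := by
        rw [hz]; push_cast
        linear_combination (-((p : ZMod (p ^ m)) ^ n * z)) * hy1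
      rw [hx', map_mul, hcon, mul_one]
    · have hx : ¬ IsUnit x := by
        rw [hz]; push_cast
        exact fun h => hy ((isUnit_add_pow_mul hp (by omega) y z (by omega)).mp h)
      rw [χ.map_nonunit hx, χ.map_nonunit hy]
  -- the descended character
  set lift : ZMod (p ^ n) → ZMod (p ^ m) := fun b => ((b.val : ℕ) : ZMod (p ^ m)) with hliftdef
  have hlift : ∀ b, π (lift b) = b := by
    intro b
    show π ((b.val : ℕ) : ZMod (p ^ m)) = b
    rw [map_natCast, ZMod.natCast_zmod_val]
  have liftUnit : ∀ b : ZMod (p ^ n), IsUnit (lift b) → IsUnit b := by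
    intro b h
    have := h.map π
    rwa [hlift] at this
  set χ₁ : MulChar (ZMod (p ^ n)) ℂ :=
    { toFun := fun b => χ (lift b)
      map_one' := by
        have h1 : χ (lift 1) = χ 1 := const _ _ (by rw [hlift, map_one])
        show χ (lift 1) = 1
        rw [h1, χ.map_one]
      map_mul' := by
        intro a b
        have h1 : χ (lift (a * b)) = χ (lift a * lift b) :=
          const _ _ (by rw [hlift, map_mul, hlift, hlift])
        show χ (lift (a * b)) = χ (lift a) * χ (lift b)
        rw [h1, map_mul]
      map_nonunit' := by
        intro b hb
        exact χ.map_nonunit fun h => hb (liftUnit b h) } with hχ₁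
  obtain ⟨a, ha⟩ := hχ n hnm χ₁
  apply ha
  have h2 : χ₁ (ZMod.castHom (pow_dvd_pow p hnm.le) (ZMod (p ^ n)) a)
      = χ (lift (π a)) := rfl
  rw [h2]
  exact (const _ _ (by rw [hlift])).symm

/-- for `m ≥ 2` even, `∑_{x mod p^m} χ(1 + x²) = p^(m/2)`. -/
theorem quadCharSum_even
    (p m : ℕ) [Fact p.Prime] (hodd : p ≠ 2) (hm : 2 ≤ m) (hmeven : Even m)
    (χ : MulChar (ZMod (p ^ m)) ℂ) (hχ : MulPrimitive p m χ) :
    ∑ x : ZMod (p ^ m), χ (1 + x ^ 2) = (p : ℂ) ^ (m / 2) := by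
  have hp : p.Prime := Fact.out
  haveI : NeZero (p ^ m) := ⟨pow_ne_zero _ hp.pos.ne'⟩
  obtain ⟨k, hk2⟩ := hmeven
  have hk1 : 1 ≤ k := by omega
  haveI : NeZero (p ^ k) := ⟨pow_ne_zero _ hp.pos.ne'⟩
  have hm2 : m / 2 = k := by omega
  have hKK : p ^ k * p ^ k = p ^ m := by rw [← pow_add, hk2]
  set π : ZMod (p ^ m) := (p : ZMod (p ^ m)) ^ k with hπ
  have hπ2 : π * π = 0 := by
    rw [hπ, ← pow_add, ← hk2, ← Nat.cast_pow, ZMod.natCast_self]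
  set e : ZMod (p ^ k) × ZMod (p ^ k) → ZMod (p ^ m) :=
    fun uv => ((uv.1.val + p ^ k * uv.2.val : ℕ) : ZMod (p ^ m)) with he
  have hbound : ∀ u v : ZMod (p ^ k), u.val + p ^ k * v.val < p ^ m := by
    intro u v
    calc u.val + p ^ k * v.val < p ^ k + p ^ k * v.val := by
          exact Nat.add_lt_add_right (ZMod.val_lt u) _
      _ = p ^ k * (v.val + 1) := by ring
      _ ≤ p ^ k * p ^ k := Nat.mul_le_mul_left (p ^ k) (ZMod.val_lt v)
      _ = p ^ m := hKK
  have hinj : Function.Injective e := by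
    rintro ⟨u, v⟩ ⟨u', v'⟩ h
    simp only [he] at h
    have h2 := congrArg ZMod.val h
    rw [ZMod.val_cast_of_lt (hbound u v), ZMod.val_cast_of_lt (hbound u' v')] at h2
    have h3 : u.val = u'.val := by
      have := congrArg (· % p ^ k) h2
      simpa [Nat.add_mul_mod_self_left, Nat.mod_eq_of_lt (ZMod.val_lt u),
        Nat.mod_eq_of_lt (ZMod.val_lt u')] using this
    have h4 : v.val = v'.val := by
      have hKpos : 0 < p ^ k := pow_pos hp.pos k
      have h5 : p ^ k * v.val = p ^ k * v'.val := by omega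
      exact Nat.eq_of_mul_eq_mul_left hKpos h5
    exact Prod.ext (ZMod.val_injective (p ^ k) h3) (ZMod.val_injective (p ^ k) h4)
  have hbij : Function.Bijective e := by
    rw [Fintype.bijective_iff_injective_and_card]
    refine ⟨hinj, ?_⟩
    simp [ZMod.card, hKK]
  have hterm : ∀ u v : ZMod (p ^ k), e (u, v) =
      ((u.val : ZMod (p ^ m)) + π * (v.val : ZMod (p ^ m))) := by
    intro u v
    simp only [he, hπ]
    push_cast
    ring
  have key : ∀ u : ZMod (p ^ k),
      (∑ v : ZMod (p ^ k), χ (1 + (e (u, v)) ^ 2)) = if u = 0 then ((p : ℂ) ^ k) else 0 := by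
    intro u
    have hrw : ∀ v : ZMod (p ^ k), (1 : ZMod (p ^ m)) + (e (u, v)) ^ 2
        = (1 + (u.val : ZMod (p ^ m)) ^ 2)
          + π * (2 * (u.val : ZMod (p ^ m)) * (v.val : ZMod (p ^ m))) := by
      intro v
      rw [hterm u v]
      linear_combination ((v.val : ZMod (p ^ m)) ^ 2) * hπ2
    by_cases hu : u = 0
    · subst hu
      rw [if_pos rfl]
      have h1 : ∀ v : ZMod (p ^ k), χ (1 + (e (0, v)) ^ 2) = 1 := by
        intro v
        rw [hrw v]
        simp [ZMod.val_zero]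
      rw [Finset.sum_congr rfl fun v _ => h1 v]
      simp [ZMod.card]
    · rw [if_neg hu]
      set U : ZMod (p ^ m) := (u.val : ZMod (p ^ m)) with hU
      by_cases hunit : IsUnit (1 + U ^ 2)
      case neg =>
        apply Finset.sum_eq_zero
        intro v _
        apply χ.map_nonunit
        rw [hrw v, hπ]
        exact fun h => hunit ((isUnit_add_pow_mul hp (by omega) _ _ hk1).mp h)
      case pos =>
        have huv0 : u.val ≠ 0 := by
          simpa [ZMod.val_eq_zero] using hu
        obtain ⟨j, w, hw, huval⟩ := Nat.exists_eq_pow_mul_and_not_dvd huv0 p hp.ne_one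
        have hjk : j < k := by
          have h1 : p ^ j ≤ u.val := Nat.le_of_dvd (Nat.pos_of_ne_zero huv0) ⟨w, huval⟩
          have h2 : u.val < p ^ k := ZMod.val_lt u
          exact (Nat.pow_lt_pow_iff_right hp.one_lt).mp (lt_of_le_of_lt h1 h2)
        set W : ZMod (p ^ m) := (1 + U ^ 2)⁻¹ with hWdef
        have hW : (1 + U ^ 2) * W = 1 := ZMod.mul_inv_of_unit _ hunit
        set E : ZMod (p ^ m) := 2 * ((w : ℕ) : ZMod (p ^ m)) * W with hE
        have hEunit : IsUnit E := by
          have h2 : IsUnit (2 : ZMod (p ^ m)) := by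
            have hpd : ¬ p ∣ 2 := fun hd =>
              hodd ((Nat.prime_dvd_prime_iff_eq hp Nat.prime_two).mp hd)
            rw [show ((2 : ZMod (p ^ m))) = ((2 : ℕ) : ZMod (p ^ m)) by norm_num,
              ZMod.isUnit_iff_coprime]
            exact Nat.Coprime.pow_right _ (Nat.coprime_comm.mp (hp.coprime_iff_not_dvd.mpr hpd))
          have hwu : IsUnit ((w : ℕ) : ZMod (p ^ m)) := by
            rw [ZMod.isUnit_iff_coprime]
            exact Nat.Coprime.pow_right _ (Nat.coprime_comm.mp (hp.coprime_iff_not_dvd.mpr hw))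
          have hWu : IsUnit W :=
            IsUnit.of_mul_eq_one (1 + U ^ 2) (by rw [mul_comm]; exact hW)
          exact (h2.mul hwu).mul hWu
        have hUE : U = (p : ZMod (p ^ m)) ^ j * ((w : ℕ) : ZMod (p ^ m)) := by
          rw [hU, huval]; push_cast; ring
        set c : ZMod (p ^ m) := E * (p : ZMod (p ^ m)) ^ j with hc
        have hfact : ∀ V : ZMod (p ^ m), (1 + U ^ 2) + π * (2 * U * V)
            = (1 + U ^ 2) * (1 + π * (c * V)) := by
          intro V
          linear_combination (2 * π * V) * hUE
            - (2 * (p : ZMod (p ^ m)) ^ j * ((w : ℕ) : ZMod (p ^ m)) * π * V) * hW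
            - ((1 + U ^ 2) * π * (p : ZMod (p ^ m)) ^ j * V) * hE
            - ((1 + U ^ 2) * π * V) * hc
        have hsplit : ∀ v : ZMod (p ^ k), χ (1 + (e (u, v)) ^ 2)
            = χ (1 + U ^ 2) * χ (1 + π * (c * (v.val : ZMod (p ^ m)))) := by
          intro v
          rw [hrw v, hfact, map_mul]
        have ψmul : ∀ a b : ZMod (p ^ m),
            χ (1 + π * a) * χ (1 + π * b) = χ (1 + π * (a + b)) := by
          intro a b
          rw [← map_mul]
          congr 1
          linear_combination (a * b) * hπ2
        obtain ⟨T₀, hT₀⟩ := exists_nontrivial_on_ker hp hm χ hχ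
        obtain ⟨Eu, hEu⟩ := hEunit
        set F : ZMod (p ^ m) := ((Eu⁻¹ : (ZMod (p ^ m))ˣ) : ZMod (p ^ m)) with hF
        have hEF : E * F = 1 := by
          rw [← hEu, hF, ← Units.val_mul, mul_inv_cancel, Units.val_one]
        set r : ℕ := (F * T₀).val % p with hr
        have hrp : r < p := Nat.mod_lt _ hp.pos
        have hdp : p ∣ p ^ m := dvd_pow_self p (by omega)
        have hcast : ZMod.castHom hdp (ZMod p) (F * T₀)
            = ZMod.castHom hdp (ZMod p) ((r : ℕ) : ZMod (p ^ m)) := by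
          rw [map_natCast, ZMod.castHom_apply, ← ZMod.natCast_val, hr, ZMod.natCast_mod]
        obtain ⟨z, hz⟩ := eq_add_of_cast_eq hdp (F * T₀) ((r : ℕ) : ZMod (p ^ m)) hcast
        have hppow : (p : ZMod (p ^ m)) ^ (m - 1) * (p : ZMod (p ^ m)) = 0 := by
          rw [← pow_succ, show m - 1 + 1 = m by omega, ← Nat.cast_pow, ZMod.natCast_self]
        have hkey1 : χ (1 + (p : ZMod (p ^ m)) ^ (m - 1) * (E * ((r : ℕ) : ZMod (p ^ m)))) ≠ 1 := by
          intro hcontra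
          apply hT₀
          rw [← hcontra]
          congr 1
          linear_combination ((p : ZMod (p ^ m)) ^ (m - 1) * E) * hz
            - ((p : ZMod (p ^ m)) ^ (m - 1) * T₀) * hEF + (E * z) * hppow
        set v₀ : ZMod (p ^ k) := ((p ^ (k - 1 - j) * r : ℕ) : ZMod (p ^ k)) with hv₀
        have hv₀val : v₀.val = p ^ (k - 1 - j) * r := by
          apply ZMod.val_cast_of_lt
          calc p ^ (k - 1 - j) * r < p ^ (k - 1 - j) * p :=
                (Nat.mul_lt_mul_left (pow_pos hp.pos _)).mpr hrp
            _ = p ^ (k - 1 - j + 1) := by rw [pow_succ]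
            _ ≤ p ^ k := Nat.pow_le_pow_right hp.pos (by omega)
        have harg : π * (c * ((v₀.val : ℕ) : ZMod (p ^ m)))
            = (p : ZMod (p ^ m)) ^ (m - 1) * (E * ((r : ℕ) : ZMod (p ^ m))) := by
          rw [hv₀val]
          push_cast
          have e1 : (p : ZMod (p ^ m)) ^ k * ((p : ZMod (p ^ m)) ^ j
              * (p : ZMod (p ^ m)) ^ (k - 1 - j)) = (p : ZMod (p ^ m)) ^ (m - 1) := by
            rw [← pow_add, ← pow_add]; congr 1; omega
          rw [hπ, hc]
          linear_combination (E * ((r : ℕ) : ZMod (p ^ m))) * e1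
        have hfv₀ : χ (1 + π * (c * ((v₀.val : ℕ) : ZMod (p ^ m)))) ≠ 1 := by
          rw [harg]; exact hkey1
        have hshift : ∀ v : ZMod (p ^ k),
            χ (1 + π * (c * (((v + v₀).val : ℕ) : ZMod (p ^ m))))
            = χ (1 + π * (c * (v.val : ZMod (p ^ m))))
              * χ (1 + π * (c * ((v₀.val : ℕ) : ZMod (p ^ m)))) := by
          intro v
          have hs := Nat.div_add_mod (v.val + v₀.val) (p ^ k)
          have hsval : (v + v₀).val = (v.val + v₀.val) % p ^ k := ZMod.val_add v v₀
          have hcasteq : π * (((v.val + v₀.val) / p ^ k : ℕ) : ZMod (p ^ m))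
              + (((v + v₀).val : ℕ) : ZMod (p ^ m))
              = ((v.val : ZMod (p ^ m)) + (v₀.val : ZMod (p ^ m))) := by
            rw [hsval, hπ]
            have := congrArg (fun t : ℕ => (t : ZMod (p ^ m))) hs
            push_cast at this ⊢
            linear_combination this
          have harg2 : π * (c * (((v + v₀).val : ℕ) : ZMod (p ^ m)))
              = π * (c * ((v.val : ZMod (p ^ m)) + (v₀.val : ZMod (p ^ m)))) := by
            linear_combination (π * c) * hcasteq
              - (c * (((v.val + v₀.val) / p ^ k : ℕ) : ZMod (p ^ m))) * hπ2
          rw [harg2, mul_add c, ← ψmul]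
        have hT : (∑ v : ZMod (p ^ k), χ (1 + π * (c * (v.val : ZMod (p ^ m))))) = 0 := by
          set S := ∑ v : ZMod (p ^ k), χ (1 + π * (c * (v.val : ZMod (p ^ m)))) with hS
          have h1 : S = ∑ v : ZMod (p ^ k),
              χ (1 + π * (c * (((v + v₀).val : ℕ) : ZMod (p ^ m)))) :=
            (Fintype.sum_equiv (Equiv.addRight v₀)
              (fun v => χ (1 + π * (c * (((v + v₀).val : ℕ) : ZMod (p ^ m)))))
              (fun v => χ (1 + π * (c * (v.val : ZMod (p ^ m))))) (fun v => rfl)).symm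
          have h2 : S = S * χ (1 + π * (c * ((v₀.val : ℕ) : ZMod (p ^ m)))) := by
            conv_lhs => rw [h1]
            rw [Finset.sum_congr rfl fun v _ => hshift v, ← Finset.sum_mul, ← hS]
          have h3 : S * (χ (1 + π * (c * ((v₀.val : ℕ) : ZMod (p ^ m)))) - 1) = 0 := by
            linear_combination -h2
          rcases mul_eq_zero.mp h3 with h | h
          · exact h
          · exact absurd (by linear_combination h) hfv₀
        rw [Finset.sum_congr rfl fun v _ => hsplit v, ← Finset.mul_sum, hT, mul_zero]
  calc ∑ x : ZMod (p ^ m), χ (1 + x ^ 2)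
      = ∑ uv : ZMod (p ^ k) × ZMod (p ^ k), χ (1 + (e uv) ^ 2) :=
        (Fintype.sum_bijective e hbij _ _ (fun _ => rfl)).symm
    _ = ∑ u : ZMod (p ^ k), ∑ v : ZMod (p ^ k), χ (1 + (e (u, v)) ^ 2) :=
        Fintype.sum_prod_type _
    _ = ∑ u : ZMod (p ^ k), if u = 0 then ((p : ℂ) ^ k) else 0 :=
        Finset.sum_congr rfl fun u _ => key u
    _ = (p : ℂ) ^ k := by simp
    _ = (p : ℂ) ^ (m / 2) := by rw [hm2]
end

section
/- Let p be an odd prime, m ≥ 3 odd, χ a primitive multiplicative character mod p^m, and π = p. Define the additive character ψ' on ℤ/pℤ by ψ'(y) = χ(1 + p^{m-1} y). Then Σ_{x ∈ ℤ/p^mℤ} χ(1 + x²) = p^{(m-1)/2} · G(χ_{1/2}, ψ'), where χ_{1/2} is the Legendre symbol mod p and G(χ_{1/2}, ψ') = Σ_{t ∈ (ℤ/pℤ)^×} χ_{1/2}(t) ψ'(t) is the Gauss sum. -/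
open Finset

lemma sum_hom_eq_zero {A : Type*} [AddCommGroup A] [Fintype A] (f : A → ℂ)
    (hf : ∀ a b, f (a + b) = f a * f b) (b : A) (hb : f b ≠ 1) :
    ∑ a : A, f a = 0 := by
  have h1 : ∑ a : A, f (b + a) = ∑ a : A, f a :=
    (Equiv.addLeft b).bijective.sum_comp f
  have h2 : (f b - 1) * ∑ a : A, f a = 0 := by
    rw [sub_mul, one_mul, sub_eq_zero, Finset.mul_sum]
    simp_rw [← hf]
    exact h1
  rcases mul_eq_zero.mp h2 with h | h
  · exact absurd (sub_eq_zero.mp h) hb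
  · exact h

section Key

variable (p : ℕ) [hp : Fact p.Prime]

lemma neZero_ppow {m : ℕ} : NeZero (p ^ m) := ⟨pow_ne_zero _ hp.out.pos.ne'⟩

lemma ppow_eq_zero {m j : ℕ} (h : m ≤ j) : (p : ZMod (p ^ m)) ^ j = 0 := by
  rw [← Nat.cast_pow, ZMod.natCast_eq_zero_iff]
  exact pow_dvd_pow p h

lemma key_congr {m n j : ℕ} (h : m ≤ n + j) (a b : ZMod (p ^ m))
    (hab : (a.val : ZMod (p ^ n)) = (b.val : ZMod (p ^ n))) :
    (p : ZMod (p ^ m)) ^ j * a = (p : ZMod (p ^ m)) ^ j * b := by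
  haveI := neZero_ppow p (m := m)
  have h1 : a.val % p ^ n = b.val % p ^ n := (ZMod.natCast_eq_natCast_iff' _ _ _).mp hab
  have H : ∀ c : ZMod (p ^ m),
      (p : ZMod (p ^ m)) ^ j * c = (p : ZMod (p ^ m)) ^ j * ((c.val % p ^ n : ℕ) : ZMod (p ^ m)) := by
    intro c
    conv_lhs => rw [← ZMod.natCast_zmod_val c, ← Nat.div_add_mod c.val (p ^ n)]
    push_cast
    rw [mul_add, ← mul_assoc, ← pow_add, ppow_eq_zero p (by omega), zero_mul, zero_add]
  rw [H a, H b, h1]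

end Key

section Prim

variable (p : ℕ) [hp : Fact p.Prime]

lemma isUnit_iff_not_dvd_s3 {n : ℕ} (hn : 0 < n) (x : ZMod (p ^ n)) :
    IsUnit x ↔ ¬ p ∣ x.val := by
  haveI := neZero_ppow p (m := n)
  conv_lhs => rw [← ZMod.natCast_zmod_val x]
  rw [ZMod.isUnit_iff_coprime, Nat.coprime_pow_right_iff hn, Nat.coprime_comm]
  exact hp.out.coprime_iff_not_dvd

lemma exists_ne_one {m : ℕ} (hm : 2 ≤ m) (χ : MulChar (ZMod (p ^ m)) ℂ)
    (hχ : MulPrimitive p m χ) :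
    ∃ b : ZMod (p ^ m), χ (1 + (p : ZMod (p ^ m)) ^ (m - 1) * b) ≠ 1 := by
  haveI := neZero_ppow p (m := m)
  haveI := neZero_ppow p (m := m - 1)
  by_contra hcon
  push_neg at hcon
  set c : ZMod (p ^ m) := (p : ZMod (p ^ m)) ^ (m - 1) with hc
  -- invariance of χ under congruence mod p^(m-1) (for units)
  have hmm : m - 1 < m := by omega
  set F := ZMod.castHom (pow_dvd_pow p hmm.le) (ZMod (p ^ (m - 1))) with hF
  have hFval : ∀ x : ZMod (p ^ m), (x.val : ZMod (p ^ (m - 1))) = F x := by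
    intro x
    rw [ZMod.castHom_apply, ZMod.natCast_val]
  have inv : ∀ x x' : ZMod (p ^ m), IsUnit x → F x = F x' → χ x = χ x' := by
    intro x x' hx hxx
    have hD : F (x' - x) = 0 := by rw [map_sub, hxx, sub_self]
    have hdvd : p ^ (m - 1) ∣ (x' - x).val := by
      rw [← ZMod.natCast_eq_zero_iff, hFval]
      exact hD
    obtain ⟨q, hq⟩ := hdvd
    have hxq : x' = x + c * (q : ZMod (p ^ m)) := by
      have h2 : x' - x = c * (q : ZMod (p ^ m)) := by
        rw [← ZMod.natCast_zmod_val (x' - x), hq]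
        push_cast
        rw [hc]
      rw [← h2]
      ring
    obtain ⟨u, hu⟩ := hx
    have hfac : x' = x * (1 + c * ((q : ZMod (p ^ m)) * ↑u⁻¹)) := by
      rw [hxq, ← hu, mul_add, mul_one]
      congr 1
      rw [show (↑u : ZMod (p ^ m)) * (c * ((q : ZMod (p ^ m)) * ↑u⁻¹)) =
          c * (q : ZMod (p ^ m)) * (↑u * ↑u⁻¹) by ring, u.mul_inv, mul_one]
    rw [hfac, map_mul, hcon, mul_one]
  -- the lifted character
  have hlt : ∀ a : ZMod (p ^ (m - 1)), a.val < p ^ m := by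
    intro a
    exact lt_of_lt_of_le (ZMod.val_lt a) (Nat.pow_le_pow_right hp.out.pos hmm.le)
  set lift : ZMod (p ^ (m - 1)) → ZMod (p ^ m) := fun a => ((a.val : ℕ) : ZMod (p ^ m)) with hlift
  have hliftval : ∀ a : ZMod (p ^ (m - 1)), (lift a).val = a.val := by
    intro a; exact ZMod.val_cast_of_lt (hlt a)
  have hFlift : ∀ a : ZMod (p ^ (m - 1)), F (lift a) = a := by
    intro a
    rw [← hFval, hliftval, ZMod.natCast_zmod_val]
  have hliftunit : ∀ a : ZMod (p ^ (m - 1)), IsUnit a → IsUnit (lift a) := by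
    intro a ha
    rw [isUnit_iff_not_dvd_s3 p (by omega), hliftval]
    rw [isUnit_iff_not_dvd_s3 p (by omega)] at ha
    exact ha
  have hliftnonunit : ∀ a : ZMod (p ^ (m - 1)), ¬ IsUnit a → χ (lift a) = 0 := by
    intro a ha
    apply χ.map_nonunit
    rw [isUnit_iff_not_dvd_s3 p (by omega), hliftval]
    rw [isUnit_iff_not_dvd_s3 p (by omega)] at ha
    simpa using ha
  set χ₁ : MulChar (ZMod (p ^ (m - 1))) ℂ :=
    { toFun := fun a => χ (lift a)
      map_one' := by
        have h1 : (1 : ZMod (p ^ (m - 1))).val = 1 := by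
          haveI : Fact (1 < p ^ (m - 1)) :=
            ⟨Nat.one_lt_pow (by omega) hp.out.one_lt⟩
          exact ZMod.val_one _
        simp only [hlift, h1, Nat.cast_one, map_one]
      map_mul' := by
        intro a b
        by_cases ha : IsUnit a
        · by_cases hb : IsUnit b
          · rw [← map_mul]
            apply inv _ _ (hliftunit _ (ha.mul hb))
            rw [map_mul, hFlift, hFlift, hFlift]
          · rw [hliftnonunit b hb, mul_zero, hliftnonunit _ (fun h => hb (isUnit_of_mul_isUnit_right h))]
        · rw [hliftnonunit a ha, zero_mul, hliftnonunit _ (fun h => ha (isUnit_of_mul_isUnit_left h))]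
      map_nonunit' := by
        intro a ha
        exact hliftnonunit a ha }
  obtain ⟨a, hane⟩ := hχ (m - 1) hmm χ₁
  apply hane
  have hχ₁ : χ₁ (F a) = χ (lift (F a)) := rfl
  show χ a = χ₁ (F a)
  rw [hχ₁]
  by_cases ha : IsUnit a
  · exact inv _ _ ha (by rw [hFlift])
  · rw [hliftnonunit _ (by
      rw [isUnit_iff_not_dvd_s3 p (by omega)] at ha ⊢
      push_neg at ha ⊢
      have : (F a).val = a.val % p ^ (m - 1) := by
        rw [← hFval, ZMod.val_natCast]
      rw [this]
      exact (Nat.dvd_mod_iff (dvd_pow_self p (by omega))).mpr ha)]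
    exact χ.map_nonunit ha

end Prim

section Key2

variable (p : ℕ) [hp : Fact p.Prime]

lemma key_congr' {m j q : ℕ} (h : p ^ m ∣ q * p ^ j) (a b : ZMod (p ^ m))
    (hab : (a.val : ZMod q) = (b.val : ZMod q)) :
    (p : ZMod (p ^ m)) ^ j * a = (p : ZMod (p ^ m)) ^ j * b := by
  haveI := neZero_ppow p (m := m)
  have h1 : a.val % q = b.val % q := (ZMod.natCast_eq_natCast_iff' _ _ _).mp hab
  have hq0 : ((q * p ^ j : ℕ) : ZMod (p ^ m)) = 0 := by
    rw [ZMod.natCast_eq_zero_iff]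
    exact h
  have H : ∀ c : ZMod (p ^ m),
      (p : ZMod (p ^ m)) ^ j * c = (p : ZMod (p ^ m)) ^ j * ((c.val % q : ℕ) : ZMod (p ^ m)) := by
    intro c
    conv_lhs => rw [← ZMod.natCast_zmod_val c, ← Nat.div_add_mod c.val q]
    push_cast
    push_cast at hq0
    linear_combination ((c.val / q : ℕ) : ZMod (p ^ m)) * hq0
  rw [H a, H b, h1]

lemma mul_hom_aux {m j : ℕ} (hj : m ≤ 2 * j) (χ : MulChar (ZMod (p ^ m)) ℂ)
    (a b : ZMod (p ^ m)) :
    χ (1 + (p : ZMod (p ^ m)) ^ j * (a + b)) =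
      χ (1 + (p : ZMod (p ^ m)) ^ j * a) * χ (1 + (p : ZMod (p ^ m)) ^ j * b) := by
  rw [← map_mul]
  congr 1
  have h2 : (p : ZMod (p ^ m)) ^ j * (p : ZMod (p ^ m)) ^ j = 0 := by
    rw [← pow_add]
    exact ppow_eq_zero p (by omega)
  linear_combination (-(a * b)) * h2

lemma psi_one_ne_one {m : ℕ} (hm : 2 ≤ m) (χ : MulChar (ZMod (p ^ m)) ℂ)
    (hχ : MulPrimitive p m χ) :
    χ (1 + (p : ZMod (p ^ m)) ^ (m - 1)) ≠ 1 := by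
  haveI := neZero_ppow p (m := m)
  obtain ⟨b, hb⟩ := exists_ne_one p hm χ hχ
  intro h1
  apply hb
  have key : ∀ n : ℕ, χ (1 + (p : ZMod (p ^ m)) ^ (m - 1) * (n : ZMod (p ^ m))) = 1 := by
    intro n
    induction n with
    | zero => simp
    | succ n ih =>
      push_cast
      rw [mul_hom_aux p (by omega) χ, ih, one_mul, mul_one, h1]
  calc χ (1 + (p : ZMod (p ^ m)) ^ (m - 1) * b)
      = χ (1 + (p : ZMod (p ^ m)) ^ (m - 1) * ((b.val : ℕ) : ZMod (p ^ m))) := by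
        rw [ZMod.natCast_zmod_val]
    _ = 1 := key b.val

end Key2

section Inner

variable (p : ℕ) [hp : Fact p.Prime]

lemma aux_inner_sum {m k : ℕ} (hm : m = 2 * k + 1) (hk : 1 ≤ k)
    (χ : MulChar (ZMod (p ^ m)) ℂ) (hχ : MulPrimitive p m χ) (d : ZMod (p ^ m)) :
    ∑ z : ZMod (p ^ k), χ (1 + (p : ZMod (p ^ m)) ^ (k + 1) * d * ((z.val : ℕ) : ZMod (p ^ m))) =
      if (d.val : ZMod (p ^ k)) = 0 then ((p ^ k : ℕ) : ℂ) else 0 := by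
  haveI := neZero_ppow p (m := m)
  haveI := neZero_ppow p (m := k)
  set P : ZMod (p ^ m) := (p : ZMod (p ^ m)) ^ (k + 1) with hP
  set G := ZMod.castHom (pow_dvd_pow p (show k ≤ m by omega)) (ZMod (p ^ k)) with hG
  have hGval : ∀ x : ZMod (p ^ m), (x.val : ZMod (p ^ k)) = G x := fun x => by
    rw [ZMod.castHom_apply, ZMod.natCast_val]
  have hGnat : ∀ n : ℕ, G ((n : ZMod (p ^ m))) = (n : ZMod (p ^ k)) := fun n => map_natCast G n
  have hmul : ∀ a b : ZMod (p ^ m), G a = G b → P * a = P * b := by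
    intro a b hab
    apply key_congr' p (q := p ^ k) (by rw [← pow_add]; apply pow_dvd_pow; omega)
    rw [hGval, hGval, hab]
  by_cases h0 : (d.val : ZMod (p ^ k)) = 0
  · rw [if_pos h0]
    have hPd : P * d = 0 := by
      have := hmul d 0 (by rw [← hGval, ← hGval, ZMod.val_zero, Nat.cast_zero, h0])
      simpa using this
    have hone : ∀ z : ZMod (p ^ k),
        χ (1 + P * d * ((z.val : ℕ) : ZMod (p ^ m))) = 1 := by
      intro z
      rw [hPd, zero_mul, add_zero, map_one]
    rw [Finset.sum_congr rfl (fun z _ => hone z)]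
    simp [ZMod.card]
  · rw [if_neg h0]
    set f : ZMod (p ^ k) → ℂ := fun z => χ (1 + P * d * ((z.val : ℕ) : ZMod (p ^ m))) with hf
    have hhom : ∀ z w : ZMod (p ^ k), f (z + w) = f z * f w := by
      intro z w
      have h1 : P * (d * (((z + w).val : ℕ) : ZMod (p ^ m))) =
          P * (d * (((z.val : ℕ) : ZMod (p ^ m)) + ((w.val : ℕ) : ZMod (p ^ m)))) := by
        apply hmul
        rw [map_mul, map_mul]
        congr 1
        rw [map_add, hGnat, hGnat, hGnat, ZMod.natCast_zmod_val, ZMod.natCast_zmod_val,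
          ZMod.natCast_zmod_val]
      show χ (1 + P * d * _) = _
      rw [mul_assoc, h1, mul_add, hP, mul_hom_aux p (j := k + 1) (by omega) χ]
      rw [hf]
      simp only [← hP]
      rw [mul_assoc, mul_assoc]
    have hd' : ¬ p ^ k ∣ d.val := by
      rwa [← ZMod.natCast_eq_zero_iff] at *
    have hv0 : d.val ≠ 0 := fun h => hd' (h ▸ dvd_zero _)
    set v := d.val with hv
    set j := v.factorization p with hj
    have hjk : j < k := by
      by_contra hge
      exact hd' (dvd_trans (pow_dvd_pow p (by omega)) (Nat.ordProj_dvd v p))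
    set w := v / p ^ j with hw
    have hvw : p ^ j * w = v := Nat.ordProj_mul_ordCompl_eq_self v p
    have hpw : ¬ p ∣ w := Nat.not_dvd_ordCompl hp.out hv0
    have hwunit : IsUnit ((w : ℕ) : ZMod (p ^ k)) := by
      rw [ZMod.isUnit_iff_coprime]
      exact Nat.Coprime.pow_right _ (Nat.coprime_comm.mp (hp.out.coprime_iff_not_dvd.mpr hpw))
    obtain ⟨uw, huw⟩ := hwunit
    set z₀ : ZMod (p ^ k) := ((p ^ (k - 1 - j) : ℕ) : ZMod (p ^ k)) * ↑uw⁻¹ with hz₀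
    have hGdz : G (d * ((z₀.val : ℕ) : ZMod (p ^ m))) = ((p ^ (k - 1) : ℕ) : ZMod (p ^ k)) := by
      rw [map_mul]
      have h2 : G d = ((v : ℕ) : ZMod (p ^ k)) := by rw [← hGval, hv]
      have h3 : G (((z₀.val : ℕ) : ZMod (p ^ m))) = z₀ := by
        rw [hGnat, ZMod.natCast_zmod_val]
      have huu : ((w : ℕ) : ZMod (p ^ k)) * ↑uw⁻¹ = 1 := by
        rw [← huw, Units.mul_inv]
      have hpow : ((p ^ j : ℕ) : ZMod (p ^ k)) * ((p ^ (k - 1 - j) : ℕ) : ZMod (p ^ k)) =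
          ((p ^ (k - 1) : ℕ) : ZMod (p ^ k)) := by
        push_cast
        rw [← pow_add]
        congr 1
        omega
      rw [h2, h3, hz₀, ← hvw]
      push_cast
      push_cast at hpow huu
      calc ((p : ZMod (p ^ k)) ^ j * ((w : ℕ) : ZMod (p ^ k))) *
            ((p : ZMod (p ^ k)) ^ (k - 1 - j) * ↑uw⁻¹)
          = ((p : ZMod (p ^ k)) ^ j * (p : ZMod (p ^ k)) ^ (k - 1 - j)) *
            (((w : ℕ) : ZMod (p ^ k)) * ↑uw⁻¹) := by ring
        _ = (p : ZMod (p ^ k)) ^ (k - 1) := by rw [hpow, huu, mul_one]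
    have hfz : f z₀ = χ (1 + (p : ZMod (p ^ m)) ^ (m - 1)) := by
      have h4 : P * (d * ((z₀.val : ℕ) : ZMod (p ^ m))) =
          P * ((p ^ (k - 1) : ℕ) : ZMod (p ^ m)) := by
        apply hmul
        rw [hGdz, hGnat]
      have h5 : P * ((p ^ (k - 1) : ℕ) : ZMod (p ^ m)) = (p : ZMod (p ^ m)) ^ (m - 1) := by
        rw [hP]
        push_cast
        rw [← pow_add]
        congr 1
        omega
      rw [hf]
      simp only
      rw [mul_assoc, h4, h5]
    exact sum_hom_eq_zero f hhom z₀ (by rw [hfz]; exact psi_one_ne_one p (by omega) χ hχ)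

end Inner

section PerY

variable (p : ℕ) [hp : Fact p.Prime]

lemma aux_inner_y {m k : ℕ} (hm : m = 2 * k + 1) (hk : 1 ≤ k) (hodd : p ≠ 2)
    (χ : MulChar (ZMod (p ^ m)) ℂ) (hχ : MulPrimitive p m χ) (y : ZMod (p ^ (k + 1))) :
    ∑ z : ZMod (p ^ k),
        χ (1 + (((y.val : ℕ) : ZMod (p ^ m)) +
          (p : ZMod (p ^ m)) ^ (k + 1) * ((z.val : ℕ) : ZMod (p ^ m))) ^ 2) =
      if p ^ k ∣ y.val then ((p ^ k : ℕ) : ℂ) * χ (1 + ((y.val : ℕ) : ZMod (p ^ m)) ^ 2)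
      else 0 := by
  haveI := neZero_ppow p (m := m)
  haveI := neZero_ppow p (m := k)
  set Y : ZMod (p ^ m) := ((y.val : ℕ) : ZMod (p ^ m)) with hY
  set P : ZMod (p ^ m) := (p : ZMod (p ^ m)) ^ (k + 1) with hP
  have hP2 : P * P = 0 := by rw [hP, ← pow_add]; exact ppow_eq_zero p (by omega)
  have hsq : ∀ Z : ZMod (p ^ m), 1 + (Y + P * Z) ^ 2 = 1 + Y ^ 2 + P * (2 * Y) * Z := by
    intro Z; linear_combination (Z ^ 2) * hP2
  set F₁ := ZMod.castHom (dvd_pow_self p (show m ≠ 0 by omega)) (ZMod p) with hF₁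
  have hF₁val : ∀ x : ZMod (p ^ m), (x.val : ZMod p) = F₁ x := fun x => by
    rw [ZMod.castHom_apply, ZMod.natCast_val]
  have hunit_iff : ∀ x : ZMod (p ^ m), IsUnit x ↔ F₁ x ≠ 0 := by
    intro x
    rw [isUnit_iff_not_dvd_s3 p (show 0 < m by omega), ← ZMod.natCast_eq_zero_iff,
      hF₁val, ne_eq]
  have hF₁P : F₁ P = 0 := by
    rw [hP, map_pow, map_natCast, ZMod.natCast_self, zero_pow (by omega)]
  by_cases hu : IsUnit (1 + Y ^ 2)
  · obtain ⟨u, hu'⟩ := hu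
    set d : ZMod (p ^ m) := 2 * Y * ↑u⁻¹ with hd
    have hfac : ∀ Z : ZMod (p ^ m),
        1 + Y ^ 2 + P * (2 * Y) * Z = (1 + Y ^ 2) * (1 + P * d * Z) := by
      intro Z
      rw [hd, ← hu']
      linear_combination (-((P : ZMod (p ^ m)) * 2 * Y * Z)) * u.inv_mul
    have hstep : ∑ z : ZMod (p ^ k),
        χ (1 + (Y + P * ((z.val : ℕ) : ZMod (p ^ m))) ^ 2) =
        χ (1 + Y ^ 2) * (if (d.val : ZMod (p ^ k)) = 0 then ((p ^ k : ℕ) : ℂ) else 0) := by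
      rw [← aux_inner_sum p hm hk χ hχ d, Finset.mul_sum]
      apply Finset.sum_congr rfl
      intro z _
      rw [hsq, hfac, map_mul, hP]
    rw [hstep]
    have hcond : ((d.val : ZMod (p ^ k)) = 0) ↔ p ^ k ∣ y.val := by
      set G := ZMod.castHom (pow_dvd_pow p (show k ≤ m by omega)) (ZMod (p ^ k)) with hG
      have hGval : (d.val : ZMod (p ^ k)) = G d := by
        rw [ZMod.castHom_apply, ZMod.natCast_val]
      have hG2 : IsUnit (G 2) := by
        have h2 : (G 2 : ZMod (p ^ k)) = ((2 : ℕ) : ZMod (p ^ k)) := by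
          push_cast
          rw [map_ofNat]
        rw [h2, ZMod.isUnit_iff_coprime]
        exact Nat.Coprime.pow_right _
          ((Nat.coprime_primes Nat.prime_two hp.out).mpr fun h => hodd h.symm)
      have hGu : IsUnit (G ((u⁻¹ : (ZMod (p ^ m))ˣ) : ZMod (p ^ m))) :=
        (Units.isUnit u⁻¹).map G
      have hsplit : G d = (G 2 * G ((u⁻¹ : (ZMod (p ^ m))ˣ) : ZMod (p ^ m))) * G Y := by
        rw [hd, map_mul, map_mul]; ring
      rw [hGval, hsplit, IsUnit.mul_right_eq_zero (hG2.mul hGu)]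
      rw [hY, map_natCast, ZMod.natCast_eq_zero_iff]
    simp only [hcond]
    split_ifs with h
    · ring
    · rw [mul_zero]
  · have hzero : ∀ Z : ZMod (p ^ m), χ (1 + (Y + P * Z) ^ 2) = 0 := by
      intro Z
      apply χ.map_nonunit
      rw [hunit_iff, ne_eq, not_not, hsq, map_add, map_mul, map_mul, hF₁P, zero_mul, zero_mul,
        add_zero]
      rw [hunit_iff, ne_eq, not_not] at hu
      exact hu
    rw [Finset.sum_congr rfl fun z _ => hzero _]
    rw [Finset.sum_const]
    simp only [smul_zero]
    split_ifs with h
    · rw [χ.map_nonunit hu, mul_zero]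
    · rfl

end PerY

section Decomp

variable (p : ℕ) [hp : Fact p.Prime]

lemma aux_sum_decomp {m k : ℕ} (hm : m = 2 * k + 1) (f : ZMod (p ^ m) → ℂ) :
    ∑ x : ZMod (p ^ m), f x =
      ∑ y : ZMod (p ^ (k + 1)), ∑ z : ZMod (p ^ k),
        f (((y.val : ℕ) : ZMod (p ^ m)) +
          (p : ZMod (p ^ m)) ^ (k + 1) * ((z.val : ℕ) : ZMod (p ^ m))) := by
  haveI := neZero_ppow p (m := m)
  haveI := neZero_ppow p (m := k)
  haveI := neZero_ppow p (m := k + 1)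
  have hppos : 0 < p := hp.out.pos
  set e : ZMod (p ^ (k + 1)) × ZMod (p ^ k) → ZMod (p ^ m) :=
    fun yz => ((yz.1.val + p ^ (k + 1) * yz.2.val : ℕ) : ZMod (p ^ m)) with he
  have hbound : ∀ yz : ZMod (p ^ (k + 1)) × ZMod (p ^ k),
      yz.1.val + p ^ (k + 1) * yz.2.val < p ^ m := by
    intro yz
    have h1 := ZMod.val_lt yz.1
    have h2 := ZMod.val_lt yz.2
    calc yz.1.val + p ^ (k + 1) * yz.2.val
        < p ^ (k + 1) * (yz.2.val + 1) := by rw [Nat.mul_succ]; omega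
      _ ≤ p ^ (k + 1) * p ^ k := by
          apply Nat.mul_le_mul_left
          omega
      _ = p ^ m := by rw [← pow_add]; congr 1; omega
  have hinj : Function.Injective e := by
    intro a b hab
    have ha := ZMod.val_cast_of_lt (hbound a)
    have hb := ZMod.val_cast_of_lt (hbound b)
    have hval : a.1.val + p ^ (k + 1) * a.2.val = b.1.val + p ^ (k + 1) * b.2.val := by
      have h := congrArg ZMod.val hab
      simp only [he] at h
      rw [ha, hb] at h
      exact h
    have hy : a.1.val = b.1.val := by
      have h1 : (a.1.val + p ^ (k + 1) * a.2.val) % p ^ (k + 1) = a.1.val := by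
        rw [Nat.add_mul_mod_self_left, Nat.mod_eq_of_lt (ZMod.val_lt a.1)]
      have h2 : (b.1.val + p ^ (k + 1) * b.2.val) % p ^ (k + 1) = b.1.val := by
        rw [Nat.add_mul_mod_self_left, Nat.mod_eq_of_lt (ZMod.val_lt b.1)]
      rw [← h1, ← h2, hval]
    have hz : a.2.val = b.2.val := by
      have h3 : p ^ (k + 1) * a.2.val = p ^ (k + 1) * b.2.val := by omega
      exact Nat.eq_of_mul_eq_mul_left (pow_pos hppos _) h3
    exact Prod.ext (ZMod.val_injective _ hy) (ZMod.val_injective _ hz)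
  have hbij : Function.Bijective e := by
    rw [Fintype.bijective_iff_injective_and_card]
    refine ⟨hinj, ?_⟩
    rw [Fintype.card_prod, ZMod.card, ZMod.card, ZMod.card, ← pow_add]
    congr 1
    omega
  set F : ZMod (p ^ (k + 1)) × ZMod (p ^ k) → ℂ :=
    fun yz => f (((yz.1.val : ℕ) : ZMod (p ^ m)) +
      (p : ZMod (p ^ m)) ^ (k + 1) * ((yz.2.val : ℕ) : ZMod (p ^ m))) with hF
  have hFe : ∀ yz, F yz = f (e yz) := by
    intro yz
    rw [hF, he]
    simp only
    congr 1
    push_cast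
    ring
  calc ∑ x : ZMod (p ^ m), f x
      = ∑ yz : ZMod (p ^ (k + 1)) × ZMod (p ^ k), F yz :=
        (Fintype.sum_bijective e hbij F f hFe).symm
    _ = ∑ y : ZMod (p ^ (k + 1)), ∑ z : ZMod (p ^ k), F (y, z) := Fintype.sum_prod_type _
    _ = _ := rfl

lemma aux_sum_multiples {k : ℕ} (hk : 1 ≤ k) (T : ZMod (p ^ (k + 1)) → ℂ)
    (h0 : ∀ y : ZMod (p ^ (k + 1)), ¬ p ^ k ∣ y.val → T y = 0) :
    ∑ y : ZMod (p ^ (k + 1)), T y =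
      ∑ t : ZMod p, T (((p ^ k * t.val : ℕ) : ZMod (p ^ (k + 1)))) := by
  haveI := neZero_ppow p (m := k + 1)
  haveI := neZero_ppow p (m := 1)
  haveI : NeZero p := ⟨hp.out.pos.ne'⟩
  have hppos : 0 < p := hp.out.pos
  set g : ZMod p → ZMod (p ^ (k + 1)) := fun t => ((p ^ k * t.val : ℕ) : ZMod (p ^ (k + 1)))
    with hg
  have hgval : ∀ t : ZMod p, (g t).val = p ^ k * t.val := by
    intro t
    apply ZMod.val_cast_of_lt
    have h1 := ZMod.val_lt t
    calc p ^ k * t.val < p ^ k * p :=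
          mul_lt_mul_of_pos_left h1 (pow_pos hppos k)
      _ = p ^ (k + 1) := by rw [pow_succ]
  have hginj : ∀ t₁ ∈ Finset.univ, ∀ t₂ ∈ Finset.univ, g t₁ = g t₂ → (t₁ : ZMod p) = t₂ := by
    intro t₁ _ t₂ _ h
    have : p ^ k * t₁.val = p ^ k * t₂.val := by rw [← hgval, ← hgval, h]
    have := Nat.eq_of_mul_eq_mul_left (pow_pos hppos _) this
    exact ZMod.val_injective _ this
  rw [show ∑ y : ZMod (p ^ (k + 1)), T y = ∑ y ∈ Finset.image g Finset.univ, T y from ?_]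
  · exact Finset.sum_image hginj
  · symm
    apply Finset.sum_subset (Finset.subset_univ _)
    intro y _ hy
    apply h0
    intro hdvd
    apply hy
    rw [Finset.mem_image]
    refine ⟨((y.val / p ^ k : ℕ) : ZMod p), Finset.mem_univ _, ?_⟩
    have hlt : y.val / p ^ k < p :=
      Nat.div_lt_of_lt_mul (by rw [← pow_succ]; exact ZMod.val_lt y)
    apply ZMod.val_injective
    rw [hgval, ZMod.val_cast_of_lt hlt, Nat.mul_div_cancel' hdvd]

end Decomp

section Count

variable (p : ℕ) [hp : Fact p.Prime]

lemma aux_square_count (hodd : p ≠ 2) (g : ZMod p → ℂ) :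
    ∑ t : ZMod p, g (t ^ 2) =
      ∑ s : ZMod p, g s + ∑ s : ZMod p, ((quadraticChar (ZMod p) s : ℤ) : ℂ) * g s := by
  haveI : NeZero p := ⟨hp.out.pos.ne'⟩
  have hchar : ringChar (ZMod p) ≠ 2 := by
    rw [ZMod.ringChar_zmod_n]; exact hodd
  rw [← Finset.sum_fiberwise' Finset.univ (fun t : ZMod p => t ^ 2) g,
    ← Finset.sum_add_distrib]
  apply Finset.sum_congr rfl
  intro s _
  rw [Finset.sum_const]
  have hcard : (({t : ZMod p | t ^ 2 = s}.toFinset.card : ℤ)) = quadraticChar (ZMod p) s + 1 :=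
    quadraticChar_card_sqrts hchar s
  have hcard' : (Finset.univ.filter (fun t : ZMod p => t ^ 2 = s)).card
      = {t : ZMod p | t ^ 2 = s}.toFinset.card := by
    congr 1
    ext t
    simp
  rw [hcard']
  have hc : (({t : ZMod p | t ^ 2 = s}.toFinset.card : ℕ) : ℂ)
      = ((quadraticChar (ZMod p) s : ℤ) : ℂ) + 1 := by
    exact_mod_cast congrArg (Int.cast : ℤ → ℂ) hcard
  rw [nsmul_eq_mul, hc]
  ring

lemma aux_units_sum (F : ZMod p → ℂ) (h0 : F 0 = 0) :
    ∑ s : ZMod p, F s = ∑ t : (ZMod p)ˣ, F ↑t := by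
  haveI : NeZero p := ⟨hp.out.pos.ne'⟩
  have h1 : ∑ s ∈ Finset.univ.filter (fun s : ZMod p => s ≠ 0), F s = ∑ s : ZMod p, F s :=
    Finset.sum_filter_of_ne (fun x _ hx => fun hx0 => hx (by rw [hx0]; exact h0))
  rw [← h1]
  calc ∑ s ∈ Finset.univ.filter (fun s : ZMod p => s ≠ 0), F s
      = ∑ x : {a : ZMod p // a ≠ 0}, F ↑x :=
        Finset.sum_subtype _ (by simp) F
    _ = ∑ t : (ZMod p)ˣ, F ↑(unitsEquivNeZero t) :=
        (Equiv.sum_comp (unitsEquivNeZero (G₀ := ZMod p))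
          (fun a : {a : ZMod p // a ≠ 0} => F ↑a)).symm
    _ = ∑ t : (ZMod p)ˣ, F ↑t := by
        apply Finset.sum_congr rfl
        intro t _
        simp

end Count

section Psi

variable (p : ℕ) [hp : Fact p.Prime]

lemma aux_p_dvd {m : ℕ} (hm : 1 ≤ m) : p ^ m ∣ p * p ^ (m - 1) := by
  have h : p * p ^ (m - 1) = p ^ m := by
    rw [← pow_succ']
    congr 1
    omega
  rw [h]

lemma aux_psi_congr {m : ℕ} (hm : 2 ≤ m) (χ : MulChar (ZMod (p ^ m)) ℂ)
    (a b : ZMod (p ^ m)) (h : (a.val : ZMod p) = (b.val : ZMod p)) :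
    χ (1 + (p : ZMod (p ^ m)) ^ (m - 1) * a) = χ (1 + (p : ZMod (p ^ m)) ^ (m - 1) * b) := by
  rw [key_congr' p (q := p) (aux_p_dvd p (by omega)) a b h]

end Psi

theorem quadCharSum_odd'
    (p m : ℕ) [hp : Fact p.Prime] (hodd : p ≠ 2) (hm : 3 ≤ m) (hmodd : Odd m)
    (χ : MulChar (ZMod (p ^ m)) ℂ) (hχ : MulPrimitive p m χ) :
    ∑ x : ZMod (p ^ m), χ (1 + x ^ 2) =
      (p : ℂ) ^ ((m - 1) / 2) *
        ∑ t : (ZMod p)ˣ,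
          (legendreSym p ((t : ZMod p).val) : ℂ) *
            χ (1 + (p : ZMod (p ^ m)) ^ (m - 1) * (((t : ZMod p).val : ZMod (p ^ m)))) := by
  obtain ⟨k, hk⟩ := hmodd
  have hk1 : 1 ≤ k := by omega
  haveI := neZero_ppow p (m := m)
  haveI : NeZero p := ⟨hp.out.pos.ne'⟩
  haveI : Fact (1 < p) := ⟨hp.out.one_lt⟩
  set ψ : ZMod p → ℂ :=
    fun s => χ (1 + (p : ZMod (p ^ m)) ^ (m - 1) * ((s.val : ℕ) : ZMod (p ^ m))) with hψ
  set F₁ := ZMod.castHom (dvd_pow_self p (show m ≠ 0 by omega)) (ZMod p) with hF₁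
  have hF₁val : ∀ x : ZMod (p ^ m), (x.val : ZMod p) = F₁ x := fun x => by
    rw [ZMod.castHom_apply, ZMod.natCast_val]
  have hF₁nat : ∀ n : ℕ, F₁ ((n : ZMod (p ^ m))) = (n : ZMod p) := fun n => map_natCast F₁ n
  have hψhom : ∀ a b : ZMod p, ψ (a + b) = ψ a * ψ b := by
    intro a b
    have h1 : χ (1 + (p : ZMod (p ^ m)) ^ (m - 1) * (((a + b).val : ℕ) : ZMod (p ^ m)))
        = χ (1 + (p : ZMod (p ^ m)) ^ (m - 1) *
            (((a.val : ℕ) : ZMod (p ^ m)) + ((b.val : ℕ) : ZMod (p ^ m)))) := by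
      apply aux_psi_congr p (by omega) χ
      rw [hF₁val, hF₁val, map_add, hF₁nat, hF₁nat, hF₁nat, ZMod.natCast_zmod_val,
        ZMod.natCast_zmod_val, ZMod.natCast_zmod_val]
    rw [hψ]
    simp only
    rw [h1, mul_hom_aux p (j := m - 1) (by omega) χ]
  have hψ1 : ψ 1 ≠ 1 := by
    have hv1 : (1 : ZMod p).val = 1 := ZMod.val_one p
    rw [hψ]
    simp only [hv1, Nat.cast_one, mul_one]
    exact psi_one_ne_one p (by omega) χ hχ
  have hψ0 : ∑ s : ZMod p, ψ s = 0 := sum_hom_eq_zero ψ hψhom 1 hψ1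
  have hterm : ∀ t : ZMod p,
      (if p ^ k ∣ (((p ^ k * t.val : ℕ) : ZMod (p ^ (k + 1)))).val
        then ((p ^ k : ℕ) : ℂ) *
          χ (1 + (((((p ^ k * t.val : ℕ) : ZMod (p ^ (k + 1)))).val : ℕ) : ZMod (p ^ m)) ^ 2)
        else 0)
      = ((p ^ k : ℕ) : ℂ) * ψ (t ^ 2) := by
    intro t
    haveI := neZero_ppow p (m := k + 1)
    have hvlt : p ^ k * t.val < p ^ (k + 1) := by
      calc p ^ k * t.val < p ^ k * p :=
            mul_lt_mul_of_pos_left (ZMod.val_lt t) (pow_pos hp.out.pos k)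
        _ = p ^ (k + 1) := by rw [pow_succ]
    have hval : (((p ^ k * t.val : ℕ) : ZMod (p ^ (k + 1)))).val = p ^ k * t.val :=
      ZMod.val_cast_of_lt hvlt
    rw [hval, if_pos ⟨t.val, rfl⟩]
    congr 1
    have h1 : ((p ^ k * t.val : ℕ) : ZMod (p ^ m))
        = (p : ZMod (p ^ m)) ^ k * ((t.val : ℕ) : ZMod (p ^ m)) := by push_cast; ring
    have hk2 : k * 2 = m - 1 := by omega
    have h2 : ((p : ZMod (p ^ m)) ^ k * ((t.val : ℕ) : ZMod (p ^ m))) ^ 2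
        = (p : ZMod (p ^ m)) ^ (m - 1) * (((t.val : ℕ) : ZMod (p ^ m))) ^ 2 := by
      rw [mul_pow, ← pow_mul, hk2]
    rw [h1, h2, hψ]
    simp only
    apply aux_psi_congr p (by omega) χ
    rw [hF₁val, hF₁val, map_pow, hF₁nat, hF₁nat, ZMod.natCast_zmod_val, ZMod.natCast_zmod_val]
  have hstep1 : ∑ x : ZMod (p ^ m), χ (1 + x ^ 2)
      = ((p ^ k : ℕ) : ℂ) * ∑ t : ZMod p, ψ (t ^ 2) := by
    calc ∑ x : ZMod (p ^ m), χ (1 + x ^ 2)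
        = ∑ y : ZMod (p ^ (k + 1)), ∑ z : ZMod (p ^ k),
            χ (1 + (((y.val : ℕ) : ZMod (p ^ m)) +
              (p : ZMod (p ^ m)) ^ (k + 1) * ((z.val : ℕ) : ZMod (p ^ m))) ^ 2) :=
          aux_sum_decomp p hk _
      _ = ∑ y : ZMod (p ^ (k + 1)),
            (if p ^ k ∣ y.val then ((p ^ k : ℕ) : ℂ) *
              χ (1 + ((y.val : ℕ) : ZMod (p ^ m)) ^ 2) else 0) :=
          Finset.sum_congr rfl fun y _ => aux_inner_y p hk hk1 hodd χ hχ y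
      _ = ∑ t : ZMod p,
            (if p ^ k ∣ (((p ^ k * t.val : ℕ) : ZMod (p ^ (k + 1)))).val
              then ((p ^ k : ℕ) : ℂ) *
                χ (1 + (((((p ^ k * t.val : ℕ) : ZMod (p ^ (k + 1)))).val : ℕ) : ZMod (p ^ m)) ^ 2)
              else 0) :=
          aux_sum_multiples p hk1 _ (fun y hy => if_neg hy)
      _ = ∑ t : ZMod p, ((p ^ k : ℕ) : ℂ) * ψ (t ^ 2) :=
          Finset.sum_congr rfl fun t _ => hterm t
      _ = ((p ^ k : ℕ) : ℂ) * ∑ t : ZMod p, ψ (t ^ 2) := by rw [Finset.mul_sum]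
  rw [hstep1, aux_square_count p hodd ψ, hψ0, zero_add]
  rw [aux_units_sum p (fun s => ((quadraticChar (ZMod p) s : ℤ) : ℂ) * ψ s)
    (by
      show ((quadraticChar (ZMod p) (0 : ZMod p) : ℤ) : ℂ) * ψ 0 = 0
      rw [quadraticChar_zero]
      push_cast
      rw [zero_mul])]
  have hcoef : ((p ^ k : ℕ) : ℂ) = (p : ℂ) ^ ((m - 1) / 2) := by
    push_cast
    congr 1
    omega
  rw [hcoef]
  congr 1
  apply Finset.sum_congr rfl
  intro t _
  have hcast : (((t : ZMod p).val : ℤ) : ZMod p) = (t : ZMod p) := by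
    push_cast
    exact ZMod.natCast_zmod_val _
  have hleg : (legendreSym p ((t : ZMod p).val) : ℂ)
      = ((quadraticChar (ZMod p) ((t : ZMod p)) : ℤ) : ℂ) := by
    rw [legendreSym, hcast]
  rw [hleg, hψ]


/-- for `m ≥ 3` odd, `∑_{x mod p^m} χ(1 + x²) = p^((m-1)/2) · G(χ_{1/2}, ψ')`,
where `ψ'(y) = χ(1 + p^(m-1)·ỹ)` and `G` is the Gauss sum of the Legendre symbol
against `ψ'`. -/
theorem quadCharSum_odd
    (p m : ℕ) [Fact p.Prime] (hodd : p ≠ 2) (hm : 3 ≤ m) (hmodd : Odd m)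
    (χ : MulChar (ZMod (p ^ m)) ℂ) (hχ : MulPrimitive p m χ) :
    ∑ x : ZMod (p ^ m), χ (1 + x ^ 2) =
      (p : ℂ) ^ ((m - 1) / 2) *
        ∑ t : (ZMod p)ˣ,
          (legendreSym p ((t : ZMod p).val) : ℂ) *
            χ (1 + (p : ZMod (p ^ m)) ^ (m - 1) * (((t : ZMod p).val : ZMod (p ^ m)))) := by
  exact quadCharSum_odd' p m hodd hm hmodd χ hχ
end

section
/- Let p ≠ 2 and let f : (pℤ_p)^n → pℤ_p be given by a power series in ℤ_p[[x]] converging on (pℤ_p)^n, such that grad(f)|_0 ≡ 0 mod p and det(Hessian(f)|_0) ≢ 0 mod p. Then f has a unique critical point c in (pℤ_p)^n, and det(Hessian(f)|_c) ≠ 0. -/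
/-- The value at `x` of the multivariate power series with coefficient family `c`
(defined as a `tsum`, which converges for `x` in `(pℤ_p)^n`). -/
noncomputable def pseval {p : ℕ} [Fact p.Prime] {n : ℕ}
    (c : (Fin n →₀ ℕ) → ℤ_[p]) (x : Fin n → ℤ_[p]) : ℤ_[p] :=
  ∑' d : Fin n →₀ ℕ, c d * ∏ i, x i ^ (d i)

/-- Formal partial derivative of a multivariate power series, on coefficients. -/
noncomputable def psderiv {p : ℕ} [Fact p.Prime] {n : ℕ} (j : Fin n)
    (c : (Fin n →₀ ℕ) → ℤ_[p]) : (Fin n →₀ ℕ) → ℤ_[p] :=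
  fun d => ((d j + 1 : ℕ) : ℤ_[p]) * c (d + Finsupp.single j 1)

namespace PUCP

variable {p : ℕ} [Fact p.Prime] {n : ℕ}

local notation "r" => ((p : ℝ)⁻¹)

lemma hp1 : (1:ℝ) < p := by exact_mod_cast (Fact.out : p.Prime).one_lt
lemma hr0 : (0:ℝ) < r := inv_pos.mpr (lt_trans one_pos hp1)
lemma hr1 : r < 1 := inv_lt_one_of_one_lt₀ hp1

lemma dvd_iff_norm_le {z : ℤ_[p]} : (p:ℤ_[p]) ∣ z ↔ ‖z‖ ≤ r := by
  rw [← PadicInt.norm_lt_one_iff_dvd]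
  have := PadicInt.norm_lt_pow_iff_norm_le_pow_sub_one z 0
  simpa using this

/-- monomial -/
noncomputable def mon (x : Fin n → ℤ_[p]) (d : Fin n →₀ ℕ) : ℤ_[p] := ∏ i, x i ^ (d i)

lemma mon_zero_right (x : Fin n → ℤ_[p]) : mon x 0 = 1 := by simp [mon]

lemma mon_single (x : Fin n → ℤ_[p]) (i : Fin n) : mon x (Finsupp.single i 1) = x i := by
  rw [mon, Finset.prod_eq_single i]
  · simp
  · intro j _ hj; simp [Finsupp.single_apply, (Ne.symm hj)]
  · simp

lemma degree_eq_zero {d : Fin n →₀ ℕ} (h : ∑ i, d i = 0) : d = 0 := by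
  ext i
  have := Finset.sum_eq_zero_iff.mp h i (Finset.mem_univ i)
  simpa using this

lemma degree_le_one {d : Fin n →₀ ℕ} (h : ∑ i, d i ≤ 1) :
    d = 0 ∨ ∃ i, d = Finsupp.single i 1 := by
  rcases Nat.le_one_iff_eq_zero_or_eq_one.mp h with h0 | h1
  · exact Or.inl (degree_eq_zero h0)
  · right
    have hne : ∃ i, d i ≠ 0 := by
      by_contra hc
      push_neg at hc
      have : d = 0 := by ext i; simpa using hc i
      simp [this] at h1
    obtain ⟨i, hi⟩ := hne
    have hsplit : d i + ∑ j ∈ Finset.univ.erase i, d j = 1 := by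
      rw [Finset.add_sum_erase _ _ (Finset.mem_univ i)]; exact h1
    have hdi : d i = 1 := by omega
    have hrest : ∑ j ∈ Finset.univ.erase i, d j = 0 := by omega
    refine ⟨i, ?_⟩
    ext j
    rcases eq_or_ne j i with rfl | hj
    · simp [hdi]
    · have := Finset.sum_eq_zero_iff.mp hrest j (by simp [hj])
      simp [Finsupp.single_apply, Ne.symm hj, this]

lemma mon_norm_le {x : Fin n → ℤ_[p]} (hx : ∀ i, ‖x i‖ ≤ r) (d : Fin n →₀ ℕ) :
    ‖mon x d‖ ≤ r ^ (∑ i, d i) := by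
  classical
  rw [mon]
  have : ∀ (s : Finset (Fin n)), ‖∏ i ∈ s, x i ^ (d i)‖ ≤ r ^ (∑ i ∈ s, d i) := by
    intro s
    induction s using Finset.induction with
    | empty => simp
    | @insert a s hns ih =>
      rw [Finset.prod_insert hns, Finset.sum_insert hns, norm_mul, pow_add]
      refine mul_le_mul ?_ ih (norm_nonneg _) (by positivity)
      calc ‖x a ^ d a‖ = ‖x a‖ ^ d a := by
            induction (d a) with
            | zero => simp
            | succ k ihk => rw [pow_succ, pow_succ, norm_mul, ihk]
        _ ≤ r ^ d a := pow_le_pow_left₀ (norm_nonneg _) (hx a) _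
  exact this Finset.univ

lemma finite_deg_le (k : ℕ) : {d : Fin n →₀ ℕ | ∑ i, d i ≤ k}.Finite := by
  classical
  have h1 : (Set.pi Set.univ (fun _ : Fin n => Set.Iic k)).Finite :=
    Set.Finite.pi (fun _ => Set.finite_Iic k)
  have h2 : {g : Fin n → ℕ | ∀ i, g i ≤ k}.Finite := by
    refine h1.subset ?_
    intro g hg
    simp only [Set.mem_pi, Set.mem_univ, Set.mem_Iic, forall_true_left]
    intro i
    exact hg i
  have h3 : ((fun d : Fin n →₀ ℕ => (d : Fin n → ℕ)) ⁻¹' {g | ∀ i, g i ≤ k}).Finite :=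
    h2.preimage (Function.Injective.injOn (DFunLike.coe_injective))
  refine h3.subset ?_
  intro d hd i
  calc d i ≤ ∑ j, d j := Finset.single_le_sum (fun j _ => Nat.zero_le _) (Finset.mem_univ i)
    _ ≤ k := hd


lemma summable_aux (e : (Fin n →₀ ℕ) → ℤ_[p]) {x : Fin n → ℤ_[p]} (hx : ∀ i, ‖x i‖ ≤ r) :
    Summable (fun d => e d * mon x d) := by
  apply NonarchimedeanAddGroup.summable_of_tendsto_cofinite_zero
  rw [Metric.tendsto_nhds]
  intro ε hε
  rw [Filter.eventually_cofinite]
  obtain ⟨k, hk⟩ := exists_pow_lt_of_lt_one hε (hr1 (p:=p))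
  refine (finite_deg_le k).subset ?_
  intro d hd
  simp only [Set.mem_setOf_eq, not_lt, dist_zero_right] at hd ⊢
  by_contra hc
  push_neg at hc
  have h1 : ‖e d * mon x d‖ ≤ r ^ (∑ i, d i) := by
    rw [norm_mul]
    calc ‖e d‖ * ‖mon x d‖ ≤ 1 * (r ^ (∑ i, d i)) :=
          mul_le_mul (PadicInt.norm_le_one _) (mon_norm_le hx d) (norm_nonneg _) zero_le_one
      _ = r ^ (∑ i, d i) := one_mul _
  have h2 : r ^ (∑ i, d i) ≤ r ^ k :=
    pow_le_pow_of_le_one hr0.le hr1.le (by omega)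
  linarith

lemma pseval_eq (e : (Fin n →₀ ℕ) → ℤ_[p]) (x : Fin n → ℤ_[p]) :
    pseval e x = ∑' d, e d * mon x d := rfl

lemma pseval_zero (e : (Fin n →₀ ℕ) → ℤ_[p]) : pseval e (0 : Fin n → ℤ_[p]) = e 0 := by
  rw [pseval_eq]
  rw [tsum_eq_single 0]
  · simp [mon_zero_right]
  · intro d hd
    have : mon (0 : Fin n → ℤ_[p]) d = 0 := by
      have hne : ∃ i, d i ≠ 0 := by
        by_contra hc
        push_neg at hc
        exact hd (by ext i; simpa using hc i)
      obtain ⟨i, hi⟩ := hne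
      rw [mon]
      exact Finset.prod_eq_zero (Finset.mem_univ i) (by simp [zero_pow hi])
    simp [this]

lemma mon_sub_norm_le {x y : Fin n → ℤ_[p]} (hx : ∀ i, ‖x i‖ ≤ r) (hy : ∀ i, ‖y i‖ ≤ r)
    (d : Fin n →₀ ℕ) : ‖mon x d - mon y d‖ ≤ r ^ ((∑ i, d i) - 1) * ‖x - y‖ := by
  classical
  have key : ∀ N : ℕ, ∀ d : Fin n →₀ ℕ, (∑ i, d i) = N →
      ‖mon x d - mon y d‖ ≤ r ^ (N - 1) * ‖x - y‖ := by
    intro N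
    induction N with
    | zero =>
      intro d hd
      rw [degree_eq_zero hd, mon_zero_right, mon_zero_right, sub_self, norm_zero]
      positivity
    | succ N ih =>
      intro d hd
      have hne : ∃ i, d i ≠ 0 := by
        by_contra hc
        push_neg at hc
        have : (∑ i, d i) = 0 := Finset.sum_eq_zero (fun i _ => hc i)
        omega
      obtain ⟨i, hi⟩ := hne
      set d' : Fin n →₀ ℕ := d - Finsupp.single i 1 with hd'
      have hdd : d = d' + Finsupp.single i 1 := by
        ext j
        rcases eq_or_ne j i with rfl | hj
        · simp [hd', Finsupp.single_apply]
          omega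
        · simp [hd', Finsupp.single_apply, Ne.symm hj]
      have hsum' : (∑ j, d' j) = N := by
        have h1 : (∑ j, d j) = (∑ j, d' j) + (∑ j, (Finsupp.single i 1 : Fin n →₀ ℕ) j) := by
          rw [hdd]; rw [← Finset.sum_add_distrib]
          exact Finset.sum_congr rfl (fun j _ => by simp)
        have h2 : (∑ j, (Finsupp.single i 1 : Fin n →₀ ℕ) j) = 1 := by
          rw [Finset.sum_eq_single i] <;> simp [Finsupp.single_apply]
          intro j hj; simp [Ne.symm hj]
        omega
      have hmonx : mon x d = mon x d' * x i := by
        rw [hdd, mon, mon]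
        rw [← mon_single x i, mon, ← Finset.prod_mul_distrib]
        exact Finset.prod_congr rfl (fun j _ => by rw [Finsupp.add_apply, pow_add])
      have hmony : mon y d = mon y d' * y i := by
        rw [hdd, mon, mon]
        rw [← mon_single y i, mon, ← Finset.prod_mul_distrib]
        exact Finset.prod_congr rfl (fun j _ => by rw [Finsupp.add_apply, pow_add])
      have hsplit : mon x d - mon y d
          = (mon x d' - mon y d') * x i + mon y d' * (x i - y i) := by
        rw [hmonx, hmony]; ring
      rw [hsplit]
      refine le_trans (PadicInt.nonarchimedean _ _) (max_le ?_ ?_)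
      · rw [norm_mul]
        have h1 : ‖mon x d' - mon y d'‖ ≤ r ^ (N - 1) * ‖x - y‖ := ih d' hsum'
        have h2 : ‖x i‖ ≤ r := hx i
        calc ‖mon x d' - mon y d'‖ * ‖x i‖ ≤ (r ^ (N - 1) * ‖x - y‖) * r := by
              refine mul_le_mul h1 h2 (norm_nonneg _) (by positivity)
          _ = (r ^ (N - 1) * r) * ‖x - y‖ := by ring
          _ ≤ r ^ (N + 1 - 1) * ‖x - y‖ := by
              refine mul_le_mul_of_nonneg_right ?_ (norm_nonneg _)
              rw [← pow_succ]
              exact pow_le_pow_of_le_one hr0.le hr1.le (by omega)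
      · rw [norm_mul]
        have h1 : ‖mon y d'‖ ≤ r ^ N := by simpa [hsum'] using mon_norm_le hy d'
        have h2 : ‖x i - y i‖ ≤ ‖x - y‖ := by
          simpa using norm_le_pi_norm (x - y) i
        calc ‖mon y d'‖ * ‖x i - y i‖ ≤ r ^ N * ‖x - y‖ :=
              mul_le_mul h1 h2 (norm_nonneg _) (by positivity)
          _ = r ^ (N + 1 - 1) * ‖x - y‖ := by norm_num
  exact key _ d rfl


lemma deg_single (i : Fin n) : (∑ j, (Finsupp.single i 1 : Fin n →₀ ℕ) j) = 1 := by
  rw [Finset.sum_eq_single i]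
  · simp
  · intro j _ hj; simp [Finsupp.single_apply, Ne.symm hj]
  · simp

lemma key_est (e : (Fin n →₀ ℕ) → ℤ_[p]) {x y : Fin n → ℤ_[p]}
    (hx : ∀ i, ‖x i‖ ≤ r) (hy : ∀ i, ‖y i‖ ≤ r) :
    ‖pseval e x - pseval e y - ∑ i, e (Finsupp.single i 1) * (x i - y i)‖ ≤ r * ‖x - y‖ := by
  classical
  set f : (Fin n →₀ ℕ) → ℤ_[p] := fun d => e d * (mon x d - mon y d) with hf
  set G : (Fin n →₀ ℕ) → ℤ_[p] := fun d => if (∑ i, d i) ≤ 1 then f d else 0 with hG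
  set F : (Fin n →₀ ℕ) → ℤ_[p] := fun d => f d - G d with hF
  have hsumf : Summable f := by
    have := (summable_aux e hx).sub (summable_aux e hy)
    simpa [hf, mul_sub] using this
  set S : Finset (Fin n →₀ ℕ) :=
    insert 0 (Finset.image (fun i => Finsupp.single i 1) Finset.univ) with hS
  have hGS : ∀ d ∉ S, G d = 0 := by
    intro d hd
    rw [hG]
    simp only
    rw [if_neg]
    intro hle
    rcases degree_le_one hle with rfl | ⟨i, rfl⟩
    · exact hd (Finset.mem_insert_self _ _)
    · exact hd (Finset.mem_insert_of_mem (Finset.mem_image_of_mem _ (Finset.mem_univ i)))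
  have hGsum : HasSum G (∑ d ∈ S, G d) := hasSum_sum_of_ne_finset_zero hGS
  have hSval : (∑ d ∈ S, G d) = ∑ i, e (Finsupp.single i 1) * (x i - y i) := by
    rw [hS, Finset.sum_insert, Finset.sum_image]
    · have h0 : G 0 = 0 := by
        have : f 0 = 0 := by rw [hf]; simp [mon_zero_right]
        simp [hG, this]
      rw [h0, zero_add]
      refine Finset.sum_congr rfl (fun i _ => ?_)
      have hd1 : (∑ j, (Finsupp.single i 1 : Fin n →₀ ℕ) j) ≤ 1 := le_of_eq (deg_single i)
      rw [hG]
      simp only [if_pos hd1]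
      rw [hf]
      simp only [mon_single]
    · intro i _ j _ hij
      by_contra hne
      have := Finsupp.single_left_injective (α := Fin n) (one_ne_zero (α := ℕ)) hij
      exact hne this
    · intro hmem
      obtain ⟨i, _, hi⟩ := Finset.mem_image.mp hmem
      exact one_ne_zero (Finsupp.single_eq_zero.mp hi)
  have hsumG : Summable G := hGsum.summable
  have hsumF : Summable F := hsumf.sub hsumG
  have hfd : pseval e x - pseval e y = ∑' d, f d := by
    rw [pseval_eq, pseval_eq, ← Summable.tsum_sub (summable_aux e hx) (summable_aux e hy)]
    exact tsum_congr fun d => by rw [hf]; ring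
  have hsplit : (∑' d, f d) = (∑ i, e (Finsupp.single i 1) * (x i - y i)) + ∑' d, F d := by
    rw [← hSval, ← hGsum.tsum_eq, ← Summable.tsum_add hsumG hsumF]
    exact tsum_congr fun d => by rw [hF]; ring
  rw [hfd, hsplit, add_sub_cancel_left]
  refine IsUltrametricDist.norm_tsum_le_of_forall_le_of_nonneg ?_ ?_
  · have := hr0 (p := p)
    positivity
  · intro d
    rw [hF, hG]
    by_cases hle : (∑ i, d i) ≤ 1
    · simp only [if_pos hle, sub_self, norm_zero]
      have := hr0 (p := p)
      positivity
    · simp only [if_neg hle, sub_zero]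
      rw [hf]
      simp only
      rw [norm_mul]
      calc ‖e d‖ * ‖mon x d - mon y d‖ ≤ 1 * (r ^ ((∑ i, d i) - 1) * ‖x - y‖) := by
            refine mul_le_mul (PadicInt.norm_le_one _) (mon_sub_norm_le hx hy d)
              (norm_nonneg _) zero_le_one
        _ = r ^ ((∑ i, d i) - 1) * ‖x - y‖ := one_mul _
        _ ≤ r ^ 1 * ‖x - y‖ := by
            refine mul_le_mul_of_nonneg_right ?_ (norm_nonneg _)
            exact pow_le_pow_of_le_one (hr0 (p:=p)).le (hr1 (p:=p)).le (by omega)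
        _ = r * ‖x - y‖ := by rw [pow_one]

lemma const_approx (e : (Fin n →₀ ℕ) → ℤ_[p]) {x : Fin n → ℤ_[p]} (hx : ∀ i, ‖x i‖ ≤ r) :
    ‖pseval e x - e 0‖ ≤ r := by
  have hy : ∀ i, ‖(0 : Fin n → ℤ_[p]) i‖ ≤ r := fun i => by simp [(hr0 (p:=p)).le]
  have h := key_est e hx hy
  rw [pseval_zero] at h
  set L : ℤ_[p] := ∑ i, e (Finsupp.single i 1) * (x i - (0 : Fin n → ℤ_[p]) i) with hL
  have hLnorm : ‖L‖ ≤ r := by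
    rw [hL]
    refine IsUltrametricDist.norm_sum_le_of_forall_le_of_nonneg (hr0 (p:=p)).le ?_
    intro i _
    simp only [Pi.zero_apply, sub_zero]
    rw [norm_mul]
    calc ‖e (Finsupp.single i 1)‖ * ‖x i‖ ≤ 1 * r :=
          mul_le_mul (PadicInt.norm_le_one _) (hx i) (norm_nonneg _) zero_le_one
      _ = r := one_mul _
  have hxnorm : ‖x - (0 : Fin n → ℤ_[p])‖ ≤ 1 := by
    rw [sub_zero]
    exact (pi_norm_le_iff_of_nonneg zero_le_one).mpr
      (fun i => le_trans (hx i) (hr1 (p:=p)).le)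
  have hrw : pseval e x - e 0 = (pseval e x - e 0 - L) + L := by ring
  rw [hrw]
  refine le_trans (PadicInt.nonarchimedean _ _) (max_le ?_ hLnorm)
  calc ‖pseval e x - e 0 - L‖ ≤ r * ‖x - (0 : Fin n → ℤ_[p])‖ := h
    _ ≤ r * 1 := mul_le_mul_of_nonneg_left hxnorm (hr0 (p:=p)).le
    _ = r := mul_one _

end PUCP

open PUCP in
/-- if `0` is a non-degenerate critical point modulo `p` of the
globally analytic `f : (pℤ_p)^n → pℤ_p`, then `f` has a unique critical point `c`
in `(pℤ_p)^n`, and it is non-degenerate. -/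
theorem padic_unique_critical_point
    (p : ℕ) [Fact p.Prime] (hodd : p ≠ 2) (n : ℕ)
    (c : (Fin n →₀ ℕ) → ℤ_[p])
    (hmap : ∀ x : Fin n → ℤ_[p], (∀ i, (p : ℤ_[p]) ∣ x i) → (p : ℤ_[p]) ∣ pseval c x)
    (hgrad0 : ∀ j, (p : ℤ_[p]) ∣ pseval (psderiv j c) 0)
    (hhess0 : ¬ (p : ℤ_[p]) ∣
      Matrix.det (Matrix.of fun i j => pseval (psderiv i (psderiv j c)) 0)) :
    (∃! x : Fin n → ℤ_[p],
        (∀ i, (p : ℤ_[p]) ∣ x i) ∧ ∀ j, pseval (psderiv j c) x = 0) ∧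
      ∀ x : Fin n → ℤ_[p], (∀ i, (p : ℤ_[p]) ∣ x i) →
        (∀ j, pseval (psderiv j c) x = 0) →
        Matrix.det (Matrix.of fun i j => pseval (psderiv i (psderiv j c)) x) ≠ 0 := by
  classical
  have hr0' : (0:ℝ) < (p:ℝ)⁻¹ := hr0
  have hr1' : ((p:ℝ))⁻¹ < 1 := hr1
  set s : Set (Fin n → ℤ_[p]) := {x | ∀ i, ‖x i‖ ≤ (p:ℝ)⁻¹} with hs
  have hmem : ∀ x : Fin n → ℤ_[p], (∀ i, (p:ℤ_[p]) ∣ x i) ↔ x ∈ s := fun x =>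
    forall_congr' fun i => dvd_iff_norm_le
  have h0s : (0 : Fin n → ℤ_[p]) ∈ s := fun i => by simp [hr0'.le]
  have hscomplete : IsComplete s := by
    have hclosed : IsClosed s := by
      have hrw : s = ⋂ i, (fun x : Fin n → ℤ_[p] => ‖x i‖) ⁻¹' Set.Iic ((p:ℝ))⁻¹ := by
        ext x; simp [hs, Set.mem_iInter]
      rw [hrw]
      exact isClosed_iInter fun i =>
        IsClosed.preimage (by continuity) isClosed_Iic
    exact hclosed.isComplete
  have hnorm1 : ∀ x ∈ s, ‖x‖ ≤ 1 := fun x hxs =>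
    (pi_norm_le_iff_of_nonneg zero_le_one).mpr fun i => (hxs i).trans hr1'.le
  -- the matrix (transpose of the Hessian at 0)
  set M : Matrix (Fin n) (Fin n) ℤ_[p] :=
    Matrix.of (fun j i => (psderiv j c) (Finsupp.single i 1)) with hM
  have hps0 : ∀ (i : Fin n) (e : (Fin n →₀ ℕ) → ℤ_[p]),
      pseval (psderiv i e) 0 = e (Finsupp.single i 1) := by
    intro i e
    rw [pseval_zero, psderiv]
    simp
  have hHM : (Matrix.of fun i j => pseval (psderiv i (psderiv j c)) 0) = M.transpose := by
    ext i j
    rw [Matrix.transpose_apply]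
    simp only [Matrix.of_apply, hM]
    exact hps0 i (psderiv j c)
  have hdetM : ¬ (p:ℤ_[p]) ∣ M.det := by
    intro hdvd
    apply hhess0
    rw [hHM, Matrix.det_transpose]
    exact hdvd
  have hdetunit : IsUnit M.det := by
    rw [PadicInt.isUnit_iff]
    refine le_antisymm (PadicInt.norm_le_one _) ?_
    by_contra hc
    push_neg at hc
    exact hdetM ((PadicInt.norm_lt_one_iff_dvd _).mp hc)
  have : Invertible M := M.invertibleOfIsUnitDet hdetunit
  set N : Matrix (Fin n) (Fin n) ℤ_[p] := ⅟M with hN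
  have hNnorm : ∀ v : Fin n → ℤ_[p], ‖N.mulVec v‖ ≤ ‖v‖ := by
    intro v
    refine (pi_norm_le_iff_of_nonneg (norm_nonneg v)).mpr fun j => ?_
    show ‖(N.mulVec v) j‖ ≤ ‖v‖
    rw [Matrix.mulVec, dotProduct]
    refine IsUltrametricDist.norm_sum_le_of_forall_le_of_nonneg (norm_nonneg v) ?_
    intro i _
    rw [norm_mul]
    calc ‖N j i‖ * ‖v i‖ ≤ 1 * ‖v‖ :=
          mul_le_mul (PadicInt.norm_le_one _) (norm_le_pi_norm v i) (norm_nonneg _) zero_le_one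
      _ = ‖v‖ := one_mul _
  set g : (Fin n → ℤ_[p]) → (Fin n → ℤ_[p]) := fun x j => pseval (psderiv j c) x with hg
  set T : (Fin n → ℤ_[p]) → (Fin n → ℤ_[p]) := fun x => x - N.mulVec (g x) with hT
  -- the contraction estimate
  have hlip : ∀ x ∈ s, ∀ y ∈ s, ‖T x - T y‖ ≤ (p:ℝ)⁻¹ * ‖x - y‖ := by
    intro x hxs y hys
    have hkey : T x - T y = N.mulVec (M.mulVec (x - y) - (g x - g y)) := by
      rw [hT]
      simp only
      rw [Matrix.mulVec_sub, Matrix.mulVec_mulVec, invOf_mul_self, Matrix.one_mulVec,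
        Matrix.mulVec_sub]
      abel
    rw [hkey]
    refine le_trans (hNnorm _) ?_
    have hrx : (0:ℝ) ≤ (p:ℝ)⁻¹ * ‖x - y‖ := by positivity
    refine (pi_norm_le_iff_of_nonneg hrx).mpr fun j => ?_
    have hcomp : (M.mulVec (x - y) - (g x - g y)) j
        = -(pseval (psderiv j c) x - pseval (psderiv j c) y
            - ∑ i, (psderiv j c) (Finsupp.single i 1) * (x i - y i)) := by
      simp only [Pi.sub_apply]
      rw [Matrix.mulVec, dotProduct]
      simp only [hM, Matrix.of_apply, hg, Pi.sub_apply]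
      ring
    rw [hcomp, norm_neg]
    exact key_est (psderiv j c) (fun i => hxs i) (fun i => hys i)
  have hg0 : ‖g 0‖ ≤ (p:ℝ)⁻¹ := by
    refine (pi_norm_le_iff_of_nonneg hr0'.le).mpr fun j => ?_
    exact dvd_iff_norm_le.mp (hgrad0 j)
  have hT0 : ‖T 0‖ ≤ (p:ℝ)⁻¹ := by
    rw [hT]
    simp only [zero_sub, norm_neg]
    exact le_trans (hNnorm _) hg0
  have hsf : Set.MapsTo T s s := by
    intro x hxs
    intro i
    have h1 : ‖T x - T 0‖ ≤ (p:ℝ)⁻¹ := by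
      refine le_trans (hlip x hxs 0 h0s) ?_
      calc (p:ℝ)⁻¹ * ‖x - 0‖ ≤ (p:ℝ)⁻¹ * 1 := by
            rw [sub_zero]
            exact mul_le_mul_of_nonneg_left (hnorm1 x hxs) hr0'.le
        _ = (p:ℝ)⁻¹ := mul_one _
    have h2 : T x i = (T x - T 0) i + (T 0) i := by simp
    rw [h2]
    refine le_trans (PadicInt.nonarchimedean _ _) (max_le ?_ ?_)
    · exact le_trans (norm_le_pi_norm _ i) h1
    · exact le_trans (norm_le_pi_norm _ i) hT0
  set K : NNReal := ⟨(p:ℝ)⁻¹, hr0'.le⟩ with hK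
  have hcontr : ContractingWith K (hsf.restrict T s s) := by
    constructor
    · rw [← NNReal.coe_lt_coe]
      exact hr1'
    · refine LipschitzWith.of_dist_le_mul fun a b => ?_
      rw [Subtype.dist_eq, Set.MapsTo.val_restrict_apply, Set.MapsTo.val_restrict_apply,
        dist_eq_norm, Subtype.dist_eq, dist_eq_norm]
      exact hlip a a.2 b b.2
  have hfixiff : ∀ x, T x = x ↔ ∀ j, pseval (psderiv j c) x = 0 := by
    intro x
    constructor
    · intro h
      have h1 : N.mulVec (g x) = 0 := by
        rw [hT] at h
        simp only at h
        rwa [sub_eq_self] at h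
      have h2 := congrArg (M.mulVec) h1
      rw [Matrix.mulVec_mulVec, mul_invOf_self, Matrix.one_mulVec, Matrix.mulVec_zero] at h2
      intro j
      exact congrFun h2 j
    · intro h
      have hgz : g x = 0 := funext h
      rw [hT]
      simp only [hgz, Matrix.mulVec_zero, sub_zero]
  -- uniqueness helper
  have huniq : ∀ x ∈ s, ∀ y ∈ s, T x = x → T y = y → x = y := by
    intro x hxs y hys hx hy
    have h1 : ‖x - y‖ ≤ (p:ℝ)⁻¹ * ‖x - y‖ := by
      calc ‖x - y‖ = ‖T x - T y‖ := by rw [hx, hy]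
        _ ≤ (p:ℝ)⁻¹ * ‖x - y‖ := hlip x hxs y hys
    have h2 : ‖x - y‖ = 0 := by nlinarith [norm_nonneg (x - y)]
    have := norm_eq_zero.mp h2
    exact sub_eq_zero.mp this
  constructor
  · -- existence and uniqueness
    obtain ⟨y, hys, hyfix, -, -⟩ :=
      ContractingWith.exists_fixedPoint' hscomplete hsf hcontr h0s (edist_ne_top _ _)
    refine ⟨y, ⟨(hmem y).mpr hys, (hfixiff y).mp hyfix⟩, ?_⟩
    intro z ⟨hzdvd, hzcrit⟩
    exact huniq z ((hmem z).mp hzdvd) y hys ((hfixiff z).mpr hzcrit) hyfix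
  · -- nondegeneracy
    intro x hxdvd _
    have hxs : x ∈ s := (hmem x).mp hxdvd
    set φ := (PadicInt.toZMod : ℤ_[p] →+* ZMod p) with hφ
    have hker : ∀ z : ℤ_[p], φ z = 0 ↔ (p:ℤ_[p]) ∣ z := by
      intro z
      rw [hφ, ← RingHom.mem_ker, PadicInt.ker_toZMod, PadicInt.maximalIdeal_eq_span_p,
        Ideal.mem_span_singleton]
    have hcong : ∀ i j : Fin n,
        φ (pseval (psderiv i (psderiv j c)) x) = φ (pseval (psderiv i (psderiv j c)) 0) := by
      intro i j
      have hdvd : (p:ℤ_[p]) ∣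
          (pseval (psderiv i (psderiv j c)) x - pseval (psderiv i (psderiv j c)) 0) := by
        rw [dvd_iff_norm_le, pseval_zero]
        exact const_approx _ (fun k => hxs k)
      have h3 := (hker _).mpr hdvd
      rw [map_sub, sub_eq_zero] at h3
      exact h3
    intro hdet0
    apply hhess0
    have h1 : φ ((Matrix.of fun i j => pseval (psderiv i (psderiv j c)) x).det)
            = φ ((Matrix.of fun i j => pseval (psderiv i (psderiv j c)) 0).det) := by
      rw [RingHom.map_det, RingHom.map_det]
      congr 1
      ext i j
      simp only [RingHom.mapMatrix_apply, Matrix.map_apply, Matrix.of_apply]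
      exact hcong i j
    rw [hdet0, map_zero] at h1
    exact (hker _).mp h1.symm
end

section
/- Let p be a prime, m > 1, χ a primitive multiplicative character mod p^m (extended by zero), ψ a primitive additive character mod p^m, f ∈ ℤ[x₁,…,x_n] homogeneous of degree d with p ∤ d, and L(x) = Σ a_i x_i a linear form with min_i v_p(a_i) = k ≥ 1. Then S(L) = Σ_{x ∈ (ℤ/p^mℤ)^n} χ(f(x)) ψ(L(x)) = 0. -/
lemma eval_mul_of_homog {R : Type*} [CommRing R] {σ : Type*} {φ : MvPolynomial σ R} {d : ℕ}
    (hφ : φ.IsHomogeneous d) (c : R) (x : σ → R) :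
    MvPolynomial.eval (fun i => c * x i) φ = c ^ d * MvPolynomial.eval x φ := by
  rw [MvPolynomial.eval_eq, MvPolynomial.eval_eq, Finset.mul_sum]
  apply Finset.sum_congr rfl
  intro s hs
  have hdeg : ∑ i ∈ s.support, s i = d := by
    have := hφ (MvPolynomial.mem_support_iff.mp hs)
    rw [← this]
    simp [Finsupp.weight_apply, Finsupp.sum]
  rw [← hdeg]
  simp only [mul_pow, Finset.prod_mul_distrib, Finset.prod_pow_eq_pow_sum]
  ring


/-- An additive character mod `p^m` is primitive if it is not induced by a
character mod `p^n` for any `n < m`. -/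
def AddPrimitive (p m : ℕ) (ψ : AddChar (ZMod (p ^ m)) ℂ) : Prop :=
  ∀ n : ℕ, ∀ hn : n < m, ∀ ψ₁ : AddChar (ZMod (p ^ n)) ℂ,
    ∃ a : ZMod (p ^ m), ψ a ≠ ψ₁ (ZMod.castHom (pow_dvd_pow p hn.le) (ZMod (p ^ n)) a)

lemma chi_one_add_ne_one (p m : ℕ) [hp : Fact p.Prime] (hm : 1 < m)
    (χ : MulChar (ZMod (p ^ m)) ℂ) (hχ : MulPrimitive p m χ) :
    χ (1 + (p : ZMod (p ^ m)) ^ (m - 1)) ≠ 1 := by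
  haveI : NeZero (p ^ m) := ⟨pow_ne_zero _ hp.out.ne_zero⟩
  haveI : NeZero (p ^ (m - 1)) := ⟨pow_ne_zero _ hp.out.ne_zero⟩
  set P : ZMod (p ^ m) := (p : ZMod (p ^ m)) ^ (m - 1) with hPdef
  intro hg
  have hpm : ((p : ZMod (p ^ m))) ^ m = 0 := by
    rw [← Nat.cast_pow, ZMod.natCast_self]
  have hP2 : P * P = 0 := by
    rw [hPdef, ← pow_add]
    obtain ⟨c, hc⟩ := Nat.exists_eq_add_of_le (show m ≤ (m - 1) + (m - 1) by omega)
    rw [hc, pow_add, hpm, zero_mul]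
  have hgeom : ∀ t : ℕ, (1 + P) ^ t = 1 + (t : ZMod (p ^ m)) * P := by
    intro t
    induction t with
    | zero => simp
    | succ t ih =>
      rw [pow_succ, ih]
      push_cast
      linear_combination (t : ZMod (p ^ m)) * hP2
  -- every 1 + P * s is χ-trivial
  have hstab : ∀ s : ZMod (p ^ m), χ (1 + P * s) = 1 := by
    intro s
    have h1 : 1 + P * s = (1 + P) ^ s.val := by
      rw [hgeom s.val, ZMod.natCast_rightInverse s]
      ring
    rw [h1, map_pow, hg, one_pow]
  have hunit : ∀ s : ZMod (p ^ m), IsUnit (1 + P * s) := by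
    intro s
    exact ⟨⟨1 + P * s, 1 - P * s, by linear_combination (-s*s) * hP2,
      by linear_combination (-s*s) * hP2⟩, rfl⟩
  set π := ZMod.castHom (pow_dvd_pow p (Nat.sub_le m 1)) (ZMod (p ^ (m - 1))) with hπ
  have hker : ∀ x : ZMod (p ^ m), π x = 0 → ∃ t : ZMod (p ^ m), x = P * t := by
    intro x hx
    have hx' : ((x.val : ℕ) : ZMod (p ^ (m - 1))) = 0 := by
      rw [ZMod.natCast_val]
      rwa [ZMod.castHom_apply] at hx
    have hdvd : p ^ (m - 1) ∣ x.val := (ZMod.natCast_eq_zero_iff _ _).mp hx'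
    obtain ⟨c, hc⟩ := hdvd
    refine ⟨(c : ZMod (p ^ m)), ?_⟩
    conv_lhs => rw [← ZMod.natCast_rightInverse x]
    rw [hc]
    push_cast
    rfl
  -- fibers of π
  have hfibfac : ∀ x y : ZMod (p ^ m), π x = π y → ∃ t, y = x + P * t := by
    intro x y h
    obtain ⟨t, ht⟩ := hker (y - x) (by rw [map_sub, h, sub_self])
    exact ⟨t, by linear_combination ht⟩
  have hykey : ∀ x y : ZMod (p ^ m), (∃ t, y = x + P * t) → IsUnit x →
      ∃ s, y = x * (1 + P * s) := by
    intro x y ⟨t, ht⟩ hx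
    refine ⟨(hx.unit⁻¹ : (ZMod (p ^ m))ˣ) * t, ?_⟩
    have hinv : x * (hx.unit⁻¹ : (ZMod (p ^ m))ˣ) = 1 := hx.mul_val_inv
    rw [ht]
    linear_combination (-(P * t)) * hinv
  have hfibunit : ∀ x y : ZMod (p ^ m), π x = π y → IsUnit x → IsUnit y := by
    intro x y h hx
    obtain ⟨s, hs⟩ := hykey x y (hfibfac x y h) hx
    rw [hs]
    exact hx.mul (hunit _)
  have hfib : ∀ x y : ZMod (p ^ m), π x = π y → χ x = χ y := by
    intro x y h
    by_cases hx : IsUnit x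
    · obtain ⟨s, hs⟩ := hykey x y (hfibfac x y h) hx
      rw [hs, map_mul, hstab, mul_one]
    · have hy : ¬ IsUnit y := fun hy => hx (hfibunit y x h.symm hy)
      rw [χ.map_nonunit hx, χ.map_nonunit hy]
  -- build the induced character mod p^(m-1)
  set lift : ZMod (p ^ (m - 1)) → ZMod (p ^ m) := fun y => ((y.val : ℕ) : ZMod (p ^ m))
    with hlift
  have hπlift : ∀ y, π (lift y) = y := by
    intro y
    rw [hlift]
    simp only [map_natCast]
    exact ZMod.natCast_rightInverse y
  set χ₁ : MulChar (ZMod (p ^ (m - 1))) ℂ :=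
    { toFun := fun y => χ (lift y)
      map_one' := by
        show χ (lift 1) = 1
        rw [hfib (lift 1) 1 (by rw [hπlift, map_one]), map_one]
      map_mul' := fun y z => by
        show χ (lift (y * z)) = χ (lift y) * χ (lift z)
        rw [hfib (lift (y * z)) (lift y * lift z)
          (by rw [hπlift, map_mul, hπlift, hπlift]), map_mul]
      map_nonunit' := fun y hy => by
        show χ (lift y) = 0
        apply χ.map_nonunit
        intro h
        exact hy (hπlift y ▸ h.map π) } with hχ₁
  obtain ⟨b, hb⟩ := hχ (m - 1) (by omega) χ₁
  exact hb (hfib b (lift (π b)) (hπlift (π b)).symm)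

/-- the twisted character sum `∑_x χ(f(x))ψ(L(x))` vanishes when all
coefficients of the linear form `L` are divisible by `p` (i.e. `k ≥ 1`). -/
theorem twistedCharSum_eq_zero_of_L_divisible
    (p m n d : ℕ) [Fact p.Prime] (hm : 1 < m)
    (χ : MulChar (ZMod (p ^ m)) ℂ) (hχ : MulPrimitive p m χ)
    (ψ : AddChar (ZMod (p ^ m)) ℂ) (hψ : AddPrimitive p m ψ)
    (f : MvPolynomial (Fin n) ℤ) (hf : f.IsHomogeneous d) (hpd : ¬ (p : ℤ) ∣ (d : ℤ))
    (a : Fin n → ZMod (p ^ m)) (hk : ∀ i, (p : ZMod (p ^ m)) ∣ a i) :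
    ∑ x : Fin n → ZMod (p ^ m),
        χ (MvPolynomial.aeval x f) * ψ (∑ i, a i * x i) = 0 := by
  haveI : NeZero (p ^ m) := ⟨pow_ne_zero _ (Fact.out : p.Prime).ne_zero⟩
  set P : ZMod (p ^ m) := (p : ZMod (p ^ m)) ^ (m - 1) with hPdef
  have hpm : ((p : ZMod (p ^ m))) ^ m = 0 := by
    rw [← Nat.cast_pow, ZMod.natCast_self]
  have hP2 : P * P = 0 := by
    rw [hPdef, ← pow_add]
    obtain ⟨c, hc⟩ := Nat.exists_eq_add_of_le (show m ≤ (m - 1) + (m - 1) by omega)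
    rw [hc, pow_add, hpm, zero_mul]
  have hPp : (p : ZMod (p ^ m)) * P = 0 := by
    rw [hPdef, ← pow_succ']
    rw [show m - 1 + 1 = m by omega, hpm]
  set g : ZMod (p ^ m) := 1 + P with hgdef
  have hω1 : χ g ≠ 1 := chi_one_add_ne_one p m hm χ hχ
  set ω : ℂ := χ g with hωdef
  have hgeom : ∀ t : ℕ, (1 + P) ^ t = 1 + (t : ZMod (p ^ m)) * P := by
    intro t
    induction t with
    | zero => simp
    | succ t ih =>
      rw [pow_succ, ih]
      push_cast
      linear_combination (t : ZMod (p ^ m)) * hP2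
  have hgp : g ^ p = 1 := by
    rw [hgdef, hgeom p, hPp, add_zero]
  have hωp : ω ^ p = 1 := by
    rw [hωdef, ← map_pow, hgp, map_one]
  have hωd : ω ^ d ≠ 1 := by
    intro h
    have h1 : orderOf ω ∣ p := orderOf_dvd_of_pow_eq_one hωp
    have h2 : orderOf ω ∣ d := orderOf_dvd_of_pow_eq_one h
    rcases ((Fact.out : p.Prime).eq_one_or_self_of_dvd _ h1) with h3 | h3
    · exact hω1 (orderOf_eq_one_iff.mp h3)
    · exact hpd (Int.natCast_dvd_natCast.mpr (h3 ▸ h2))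
  have hgu : IsUnit g := ⟨⟨g, 1 - P, by rw [hgdef]; linear_combination -hP2,
    by rw [hgdef]; linear_combination -hP2⟩, rfl⟩
  set T : (Fin n → ZMod (p ^ m)) → (Fin n → ZMod (p ^ m)) := fun x i => g * x i with hT
  have hbij : Function.Bijective T := by
    apply Function.bijective_iff_has_inverse.mpr
    refine ⟨fun x i => (hgu.unit⁻¹ : (ZMod (p ^ m))ˣ) * x i, ?_, ?_⟩
    · intro x
      funext i
      show (hgu.unit⁻¹ : (ZMod (p ^ m))ˣ) * (g * x i) = x i
      rw [← mul_assoc, hgu.val_inv_mul, one_mul]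
    · intro x
      funext i
      show g * ((hgu.unit⁻¹ : (ZMod (p ^ m))ˣ) * x i) = x i
      rw [← mul_assoc, hgu.mul_val_inv, one_mul]
  have hmap : ∀ y : Fin n → ZMod (p ^ m), MvPolynomial.aeval y f
      = MvPolynomial.eval y (MvPolynomial.map (algebraMap ℤ (ZMod (p ^ m))) f) := by
    intro y
    rw [MvPolynomial.aeval_def, MvPolynomial.eval₂_eq_eval_map]
  have hterm : ∀ x : Fin n → ZMod (p ^ m),
      χ (MvPolynomial.aeval (T x) f) * ψ (∑ i, a i * T x i)
        = ω ^ d * (χ (MvPolynomial.aeval x f) * ψ (∑ i, a i * x i)) := by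
    intro x
    have h1 : MvPolynomial.aeval (T x) f = g ^ d * MvPolynomial.aeval x f := by
      rw [hmap, hmap]
      exact eval_mul_of_homog (hf.map _) g x
    have h2 : ∑ i, a i * T x i = ∑ i, a i * x i := by
      apply Finset.sum_congr rfl
      intro i _
      obtain ⟨b, hb⟩ := hk i
      show a i * (g * x i) = a i * x i
      rw [hgdef]
      linear_combination (b * x i) * hPp + (P * x i) * hb
    rw [h1, h2, map_mul, map_pow, hωdef]
    ring
  have key : ω ^ d * (∑ x : Fin n → ZMod (p ^ m),
      χ (MvPolynomial.aeval x f) * ψ (∑ i, a i * x i))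
      = ∑ x : Fin n → ZMod (p ^ m),
      χ (MvPolynomial.aeval x f) * ψ (∑ i, a i * x i) := by
    rw [Finset.mul_sum]
    calc ∑ x : Fin n → ZMod (p ^ m),
          ω ^ d * (χ (MvPolynomial.aeval x f) * ψ (∑ i, a i * x i))
        = ∑ x : Fin n → ZMod (p ^ m),
          χ (MvPolynomial.aeval (T x) f) * ψ (∑ i, a i * T x i) :=
          Finset.sum_congr rfl fun x _ => (hterm x).symm
      _ = _ := hbij.sum_comp (fun y => χ (MvPolynomial.aeval y f) * ψ (∑ i, a i * y i))
  have hz : (ω ^ d - 1) * (∑ x : Fin n → ZMod (p ^ m),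
      χ (MvPolynomial.aeval x f) * ψ (∑ i, a i * x i)) = 0 := by
    linear_combination key
  rcases mul_eq_zero.mp hz with h | h
  · exact absurd (sub_eq_zero.mp h) hωd
  · exact h
end

section
/- Let p be a prime, m > 1, χ a primitive multiplicative character mod p^m (extended by zero), ψ a primitive additive character mod p^m, f ∈ ℤ[x₁,…,x_n] homogeneous of degree d with p ∤ d, and L(x) = Σ a_i x_i a linear form with min_i v_p(a_i) = 0. Then Σ_{x ∈ (ℤ/p^mℤ)^n} χ(f(x)) ψ(L(x)) = (Σ_{y ∈ ℤ/p^mℤ} χ(y)^d ψ(y)) · (Σ_{x : L(x) ≡ 1 mod p^m} χ(f(x))). -/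
open Finset

/- ### Auxiliary lemmas -/

lemma aux_one_add_pow {R : Type*} [CommRing R] {y : R} (hy : y * y = 0) (d : ℕ) :
    (1 + y) ^ d = 1 + (d : R) * y := by
  induction d with
  | zero => simp
  | succ k ih =>
    rw [pow_succ, ih]
    push_cast
    ring_nf
    linear_combination (k : R) * hy

lemma aux_eval_mul {σ R : Type*} [CommRing R] {φ : MvPolynomial σ R} {d : ℕ}
    (hφ : φ.IsHomogeneous d) (r : R) (x : σ → R) :
    MvPolynomial.eval (fun i => r * x i) φ = r ^ d * MvPolynomial.eval x φ := by
  rw [MvPolynomial.eval_eq, MvPolynomial.eval_eq, Finset.mul_sum]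
  refine Finset.sum_congr rfl fun s hs => ?_
  have hd : Finsupp.weight 1 s = d := hφ (MvPolynomial.mem_support_iff.mp hs)
  have hdeg : ∑ i ∈ s.support, s i = d := by
    rw [← hd, Finsupp.weight_apply]; simp [Finsupp.sum]
  rw [← hdeg]
  simp_rw [mul_pow, Finset.prod_mul_distrib, Finset.prod_pow_eq_pow_sum]
  ring

section ZModFacts

variable (p m : ℕ) [Fact p.Prime]

local notation "R" => ZMod (p ^ m)

lemma aux_neZero : NeZero (p ^ m) :=
  ⟨pow_ne_zero m (Nat.Prime.ne_zero Fact.out)⟩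

lemma aux_eps_sq (hm : 1 < m) : ((p : R) ^ (m - 1)) * ((p : R) ^ (m - 1)) = 0 := by
  have h0 : ((p ^ (2 * m - 2) : ℕ) : R) = 0 := by
    rw [ZMod.natCast_eq_zero_iff]
    exact pow_dvd_pow p (by omega)
  rw [← pow_add]
  push_cast at h0
  rw [show m - 1 + (m - 1) = 2 * m - 2 by omega]
  exact h0

lemma aux_eps_mul_nonunit (hm : 1 < m) {t : R} (ht : ¬ IsUnit t) :
    ((p : R) ^ (m - 1)) * t = 0 := by
  haveI := aux_neZero p m
  have hval : ((t.val : ℕ) : R) = t := ZMod.natCast_zmod_val t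
  have hcop : ¬ Nat.Coprime t.val (p ^ m) := by
    rw [← ZMod.isUnit_iff_coprime, hval]; exact ht
  have hdvd : p ∣ t.val := by
    by_contra hnd
    exact hcop (Nat.Coprime.pow_right m (Nat.coprime_comm.mp
      ((Nat.Prime.coprime_iff_not_dvd Fact.out).mpr hnd)))
  obtain ⟨k, hk⟩ := hdvd
  have ht2 : t = (p : R) * (k : ℕ) := by rw [← hval, hk]; push_cast; ring
  rw [ht2, ← mul_assoc, ← pow_succ, show m - 1 + 1 = m by omega]
  have h0 : ((p ^ m : ℕ) : R) = 0 := by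
    rw [ZMod.natCast_eq_zero_iff]
  push_cast at h0
  rw [h0, zero_mul]

lemma aux_isUnit_cast_iff (hm : 1 < m) (x : R) :
    IsUnit (ZMod.castHom (pow_dvd_pow p (Nat.sub_le m 1)) (ZMod (p ^ (m - 1))) x) ↔ IsUnit x := by
  haveI := aux_neZero p m
  have hval : ((x.val : ℕ) : R) = x := ZMod.natCast_zmod_val x
  have h1 : (ZMod.castHom (pow_dvd_pow p (Nat.sub_le m 1)) (ZMod (p ^ (m - 1))) x)
      = ((x.val : ℕ) : ZMod (p ^ (m - 1))) := by
    conv_lhs => rw [← hval]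
    rw [map_natCast]
  have hL : IsUnit ((x.val : ZMod (p ^ (m - 1)))) ↔ x.val.Coprime (p ^ (m - 1)) :=
    ZMod.isUnit_iff_coprime _ _
  have hR : IsUnit x ↔ x.val.Coprime (p ^ m) := by
    conv_lhs => rw [← hval]
    exact ZMod.isUnit_iff_coprime _ _
  rw [h1, hL, hR, Nat.coprime_pow_right_iff (by omega : 0 < m - 1),
    Nat.coprime_pow_right_iff (by omega : 0 < m)]

lemma aux_cast_eq_zero (hm : 1 < m) {z : R}
    (hz : ZMod.castHom (pow_dvd_pow p (Nat.sub_le m 1)) (ZMod (p ^ (m - 1))) z = 0) :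
    ∃ c : R, z = ((p : R) ^ (m - 1)) * c := by
  haveI := aux_neZero p m
  have hval : ((z.val : ℕ) : R) = z := ZMod.natCast_zmod_val z
  have h1 : ((z.val : ℕ) : ZMod (p ^ (m - 1))) = 0 := by
    rw [← hz]
    conv_rhs => rw [← hval]
    rw [map_natCast]
  rw [ZMod.natCast_eq_zero_iff] at h1
  obtain ⟨k, hk⟩ := h1
  exact ⟨(k : ℕ), by rw [← hval, hk]; push_cast; ring⟩

end ZModFacts

section Primitivity

variable (p m : ℕ) [Fact p.Prime]

local notation "R" => ZMod (p ^ m)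

/-- A primitive character is nontrivial on `1 + p^(m-1) (ZMod (p^m))`. -/
lemma aux_exists_char_ne_one (hm : 1 < m) (χ : MulChar R ℂ) (hχ : MulPrimitive p m χ) :
    ∃ c : R, χ (1 + ((p : R) ^ (m - 1)) * c) ≠ 1 := by
  haveI := aux_neZero p m
  by_contra hcon
  push_neg at hcon
  set π := ZMod.castHom (pow_dvd_pow p (Nat.sub_le m 1)) (ZMod (p ^ (m - 1))) with hπ
  have key : ∀ x y : R, π x = π y → χ x = χ y := by
    intro x y hxy
    by_cases hx : IsUnit x
    · obtain ⟨u, hu⟩ := hx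
      have hz : π (y - x) = 0 := by rw [map_sub, hxy, sub_self]
      obtain ⟨c, hc⟩ := aux_cast_eq_zero p m hm hz
      have hy : y = x * (1 + ((p : R) ^ (m - 1)) * (((u⁻¹ : (ZMod (p ^ m))ˣ) : R) * c)) := by
        have hux : ((u⁻¹ : (ZMod (p ^ m))ˣ) : R) * x = 1 := by
          rw [← hu]; exact u.inv_mul
        have heq : y = x + ((p : R) ^ (m - 1)) * c := by
          rw [← hc]; ring
        rw [heq]
        linear_combination (-((p : R) ^ (m - 1) * c)) * hux
      rw [hy, map_mul, hcon, mul_one]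
    · have hy : ¬ IsUnit y := by
        rw [← aux_isUnit_cast_iff p m hm, ← hxy, aux_isUnit_cast_iff p m hm]
        exact hx
      rw [χ.map_nonunit hx, χ.map_nonunit hy]
  have hsurj : Function.Surjective π := by
    intro y
    obtain ⟨k, rfl⟩ := ZMod.natCast_zmod_surjective y
    exact ⟨(k : ℕ), map_natCast π k⟩
  let χ₁ : MulChar (ZMod (p ^ (m - 1))) ℂ :=
    { toFun := fun y => χ (Function.surjInv hsurj y)
      map_one' := by
        show χ (Function.surjInv hsurj 1) = 1
        rw [show χ (Function.surjInv hsurj 1) = χ 1 from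
          key _ 1 (by rw [Function.surjInv_eq hsurj 1, map_one]), map_one]
      map_mul' := by
        intro x y
        show χ (Function.surjInv hsurj (x * y))
          = χ (Function.surjInv hsurj x) * χ (Function.surjInv hsurj y)
        rw [show χ (Function.surjInv hsurj (x * y))
            = χ (Function.surjInv hsurj x * Function.surjInv hsurj y) from
          key _ _ (by rw [Function.surjInv_eq hsurj (x * y), map_mul,
            Function.surjInv_eq hsurj x, Function.surjInv_eq hsurj y]), map_mul]
      map_nonunit' := by
        intro y hy
        show χ (Function.surjInv hsurj y) = 0
        apply χ.map_nonunit
        rw [← aux_isUnit_cast_iff p m hm]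
        show ¬ IsUnit (π _)
        rw [Function.surjInv_eq hsurj y]
        exact hy }
  obtain ⟨a, ha⟩ := hχ (m - 1) (by omega) χ₁
  apply ha
  show χ a = χ (Function.surjInv hsurj (π a))
  exact (key _ a (Function.surjInv_eq hsurj (π a))).symm

end Primitivity

open scoped Classical in
/-- when some coefficient of `L` is a unit (`k = 0`), the twisted sum
factors as a Gauss-type sum times the sum of `χ(f)` over the hyperplane `L(x) = 1`. -/
theorem twistedCharSum_factorization
    (p m n d : ℕ) [Fact p.Prime] (hm : 1 < m)
    (χ : MulChar (ZMod (p ^ m)) ℂ) (hχ : MulPrimitive p m χ)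
    (ψ : AddChar (ZMod (p ^ m)) ℂ) (hψ : AddPrimitive p m ψ)
    (f : MvPolynomial (Fin n) ℤ) (hf : f.IsHomogeneous d) (hpd : ¬ (p : ℤ) ∣ (d : ℤ))
    (a : Fin n → ZMod (p ^ m)) (hk : ∃ i, IsUnit (a i)) :
    ∑ x : Fin n → ZMod (p ^ m),
        χ (MvPolynomial.aeval x f) * ψ (∑ i, a i * x i) =
      (∑ y : ZMod (p ^ m), (χ y) ^ d * ψ y) *
        ∑ x ∈ Finset.univ.filter (fun x : Fin n → ZMod (p ^ m) => ∑ i, a i * x i = 1),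
          χ (MvPolynomial.aeval x f) := by
  haveI := aux_neZero p m
  set L : (Fin n → (ZMod (p ^ m))) → (ZMod (p ^ m)) := fun x => ∑ i, a i * x i with hL
  set F : (Fin n → (ZMod (p ^ m))) → ℂ := fun x => χ (MvPolynomial.aeval x f) with hF
  have hd0 : d ≠ 0 := fun h => hpd (by rw [h]; exact dvd_zero _)
  -- scaling of the homogeneous polynomial
  have hfs : ∀ (r : (ZMod (p ^ m))) (x : Fin n → (ZMod (p ^ m))),
      (MvPolynomial.aeval (fun j => r * x j) f : (ZMod (p ^ m))) = r ^ d * MvPolynomial.aeval x f := by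
    intro r x
    have hmap : (MvPolynomial.map (Int.castRingHom (ZMod (p ^ m))) f).IsHomogeneous d := hf.map _
    have h1 : ∀ (y : Fin n → (ZMod (p ^ m))), (MvPolynomial.aeval y f : (ZMod (p ^ m)))
        = MvPolynomial.eval y (MvPolynomial.map (Int.castRingHom (ZMod (p ^ m))) f) := by
      intro y
      rw [MvPolynomial.aeval_def, MvPolynomial.eval₂_eq_eval_map, algebraMap_int_eq]
    rw [h1, h1, aux_eval_mul hmap]
  -- scaling of the linear form
  have hLs : ∀ (r : (ZMod (p ^ m))) (x : Fin n → (ZMod (p ^ m))), L (fun j => r * x j) = r * L x := by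
    intro r x
    rw [hL]
    simp only [Finset.mul_sum]
    exact Finset.sum_congr rfl fun i _ => by ring
  -- the unit w with χ(w)^d ≠ 1 fixing nonunits
  obtain ⟨c₀, hc₀⟩ := aux_exists_char_ne_one p m hm χ hχ
  have hpd' : ¬ p ∣ d := by exact_mod_cast hpd
  have hdunit : IsUnit ((d : ℕ) : (ZMod (p ^ m))) := by
    rw [ZMod.isUnit_iff_coprime]
    exact Nat.Coprime.pow_right m (Nat.coprime_comm.mp
      ((Nat.Prime.coprime_iff_not_dvd Fact.out).mpr hpd'))
  obtain ⟨e, he⟩ := hdunit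
  set ε : (ZMod (p ^ m)) := (p : (ZMod (p ^ m))) ^ (m - 1) with hε
  have hεsq : ε * ε = 0 := aux_eps_sq p m hm
  set c : (ZMod (p ^ m)) := ((e⁻¹ : (ZMod (p ^ m))ˣ) : (ZMod (p ^ m))) * c₀ with hc
  set w : (ZMod (p ^ m)) := 1 + ε * c with hw
  set w' : (ZMod (p ^ m)) := 1 - ε * c with hw'
  have hww' : w * w' = 1 := by
    rw [hw, hw']
    linear_combination (-(c * c)) * hεsq
  have hw'w : w' * w = 1 := by rw [mul_comm]; exact hww'
  have hwpow : w ^ d = 1 + ε * c₀ := by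
    rw [hw, aux_one_add_pow (by linear_combination c * c * hεsq) d]
    have hec : ((d : ℕ) : (ZMod (p ^ m))) * c = c₀ := by
      rw [hc, ← he, ← mul_assoc, e.mul_inv, one_mul]
    rw [show ((d : ℕ) : (ZMod (p ^ m))) * (ε * c) = ε * (((d : ℕ) : (ZMod (p ^ m))) * c) by ring, hec]
  have hχw : χ w ^ d ≠ 1 := by rw [← map_pow, hwpow]; exact hc₀
  have hwt : ∀ t : (ZMod (p ^ m)), ¬ IsUnit t → w * t = t := by
    intro t ht
    have h0 : ε * t = 0 := aux_eps_mul_nonunit p m hm ht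
    rw [hw]
    linear_combination c * h0
  have hwt' : ∀ t : (ZMod (p ^ m)), ¬ IsUnit t → w' * t = t := by
    intro t ht
    have h0 : ε * t = 0 := aux_eps_mul_nonunit p m hm ht
    rw [hw']
    linear_combination (-c) * h0
  -- the fiber sums
  set S : (ZMod (p ^ m)) → ℂ := fun t => ∑ x ∈ Finset.univ.filter (fun x => L x = t), F x with hS
  -- unit case: S t = χ t ^ d * S 1
  have hSunit : ∀ t : (ZMod (p ^ m)), IsUnit t → S t = χ t ^ d * S 1 := by
    intro t ht
    obtain ⟨u, hu⟩ := ht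
    rw [hS]
    simp only
    rw [Finset.mul_sum]
    symm
    refine Finset.sum_nbij' (fun x => fun j => t * x j) (fun x => fun j => ((u⁻¹ : (ZMod (p ^ m))ˣ) : (ZMod (p ^ m))) * x j) ?_ ?_ ?_ ?_ ?_
    · intro x hx
      rw [Finset.mem_filter] at hx ⊢
      refine ⟨Finset.mem_univ _, ?_⟩
      rw [hLs, hx.2, mul_one]
    · intro x hx
      rw [Finset.mem_filter] at hx ⊢
      refine ⟨Finset.mem_univ _, ?_⟩
      rw [hLs, hx.2, ← hu, u.inv_mul]
    · intro x _
      funext j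
      simp only
      rw [← mul_assoc, ← hu, u.inv_mul, one_mul]
    · intro x _
      funext j
      simp only
      rw [← mul_assoc, ← hu, u.mul_inv, one_mul]
    · intro x _
      rw [hF]
      simp only
      rw [hfs, map_mul, map_pow]
  -- nonunit case: S t = 0
  have hSnon : ∀ t : (ZMod (p ^ m)), ¬ IsUnit t → S t = 0 := by
    intro t ht
    have hrec : χ w ^ d * S t = S t := by
      rw [hS]
      simp only
      rw [Finset.mul_sum]
      refine Finset.sum_nbij' (fun x => fun j => w * x j)
        (fun x => fun j => w' * x j) ?_ ?_ ?_ ?_ ?_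
      · intro x hx
        rw [Finset.mem_filter] at hx ⊢
        refine ⟨Finset.mem_univ _, ?_⟩
        rw [hLs, hx.2, hwt t ht]
      · intro x hx
        rw [Finset.mem_filter] at hx ⊢
        refine ⟨Finset.mem_univ _, ?_⟩
        rw [hLs, hx.2, hwt' t ht]
      · intro x _
        funext j
        simp only
        rw [← mul_assoc, hw'w, one_mul]
      · intro x _
        funext j
        simp only
        rw [← mul_assoc, hww', one_mul]
      · intro x _
        rw [hF]
        simp only
        rw [hfs, map_mul, map_pow]
    have h2 : (χ w ^ d - 1) * S t = 0 := by
      rw [sub_mul, one_mul, hrec, sub_self]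
    rcases mul_eq_zero.mp h2 with h | h
    · exact absurd (by linear_combination h : χ w ^ d = 1) hχw
    · exact h
  -- combine
  have hall : ∀ t : (ZMod (p ^ m)), S t = χ t ^ d * S 1 := by
    intro t
    by_cases ht : IsUnit t
    · exact hSunit t ht
    · rw [hSnon t ht, χ.map_nonunit ht, zero_pow hd0, zero_mul]
  calc ∑ x : Fin n → (ZMod (p ^ m)), F x * ψ (L x)
      = ∑ t : (ZMod (p ^ m)), ∑ x ∈ Finset.univ.filter (fun x => L x = t), F x * ψ (L x) := by
        rw [Finset.sum_fiberwise_eq_sum_filter Finset.univ Finset.univ L (fun x => F x * ψ (L x))]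
        simp
    _ = ∑ t : (ZMod (p ^ m)), ψ t * S t := by
        refine Finset.sum_congr rfl fun t _ => ?_
        rw [hS]
        simp only
        rw [Finset.mul_sum]
        refine Finset.sum_congr rfl fun x hx => ?_
        rw [(Finset.mem_filter.mp hx).2]
        ring
    _ = ∑ t : (ZMod (p ^ m)), (χ t ^ d * ψ t) * S 1 := by
        refine Finset.sum_congr rfl fun t _ => ?_
        rw [hall t]
        ring
    _ = (∑ t : (ZMod (p ^ m)), χ t ^ d * ψ t) * S 1 := by rw [Finset.sum_mul]
end
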